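/- arXiv:1210.3248 — 12 statements merged into one kernel-verified Lean document; each statement's English description precedes it below -/
import Mathlib

section
/- (Kearns–Saul inequality) For every p ∈ [0,1] with p ≠ 1/2 (and p ≠ 0, 1) and every real t, one has (1−p)·exp(−t·p) + p·exp(t·(1−p)) ≤ exp( (1−2p) / (4·log((1−p)/p)) · t² ). -/
/-!
With `M(t) = 1 - p + p eᵗ` the left-hand side is `e^{-pt} M(t)`, so with `L = log((1-p)/p)` and
`C = (1-2p)/(4L)` the claim is `F(t) = C t² + p t - log M(t) ≥ 0`. The identity
`M(2L - t) = e^{L-t} M(t)` together with `4CL = 1 - 2p` makes `F` symmetric about `L`, and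
`F'(L) = 0`. For `p < 1/2` (so `L > 0`) and `t ≤ L` we have `F'' = 2C - q(1-q)` with
`q = p eᵗ / M(t)` increasing and `q ≤ 1/2`, so `F'` is concave on `(-∞, L]`. Vanishing at `0` and
at `L`, it is `≤ 0` on `(-∞, 0]` and `≥ 0` on `[0, L]`, so `F ≥ F(0) = 0` there. The case `p > 1/2`
follows from the symmetry `(p, t) ↦ (1 - p, -t)`.
-/

open Real Set

noncomputable section

namespace KearnsSaul

variable {p : ℝ}

def bernoulliMGF (p t : ℝ) : ℝ := 1 - p + p * exp t

def tilt (p t : ℝ) : ℝ := p * exp t / bernoulliMGF p t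

def logOdds (p : ℝ) : ℝ := log ((1 - p) / p)

def centeredMGF (p t : ℝ) : ℝ := (1 - p) * exp (-t * p) + p * exp (t * (1 - p))

def gap (p C t : ℝ) : ℝ := C * t ^ 2 + p * t - log (bernoulliMGF p t)

def gapDeriv (p C t : ℝ) : ℝ := 2 * C * t + p - tilt p t

lemma bernoulliMGF_pos (hp0 : 0 ≤ p) (hp1 : p < 1) (t : ℝ) : 0 < bernoulliMGF p t := by
  unfold bernoulliMGF; positivity

lemma bernoulliMGF_zero (p : ℝ) : bernoulliMGF p 0 = 1 := by
  simp [bernoulliMGF]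

lemma hasDerivAt_bernoulliMGF (p t : ℝ) : HasDerivAt (bernoulliMGF p) (p * exp t) t :=
  ((hasDerivAt_exp t).const_mul p).const_add (1 - p)

lemma bernoulliMGF_two_mul_logOdds_sub (hp0 : 0 < p) (hp1 : p < 1) (t : ℝ) :
    bernoulliMGF p (2 * logOdds p - t) = exp (logOdds p - t) * bernoulliMGF p t := by
  have hL : exp (logOdds p) = (1 - p) / p := exp_log (div_pos (by linarith) hp0)
  simp only [bernoulliMGF, exp_sub, two_mul, exp_add, hL]
  field_simp
  ring

lemma one_sub_tilt (hp0 : 0 ≤ p) (hp1 : p < 1) (t : ℝ) :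
    1 - tilt p t = (1 - p) / bernoulliMGF p t := by
  have := (bernoulliMGF_pos hp0 hp1 t).ne'
  rw [tilt, eq_div_iff this, sub_mul, div_mul_cancel₀ _ this, bernoulliMGF]
  ring

lemma tilt_zero (p : ℝ) : tilt p 0 = p := by
  simp [tilt, bernoulliMGF_zero]

lemma tilt_logOdds (hp0 : 0 < p) (hp1 : p < 1) : tilt p (logOdds p) = 1 / 2 := by
  have hL : exp (logOdds p) = (1 - p) / p := exp_log (div_pos (by linarith) hp0)
  have : 1 - p ≠ 0 := by linarith
  rw [tilt, bernoulliMGF, hL, mul_div_cancel₀ _ hp0.ne']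
  field_simp
  ring

lemma tilt_monotone (hp0 : 0 ≤ p) (hp1 : p < 1) : Monotone (tilt p) := by
  intro s t hst
  have key : (1 - p) / bernoulliMGF p t ≤ (1 - p) / bernoulliMGF p s :=
    div_le_div_of_nonneg_left (by linarith) (bernoulliMGF_pos hp0 hp1 s) (by
      unfold bernoulliMGF; gcongr)
  linarith [one_sub_tilt hp0 hp1 s, one_sub_tilt hp0 hp1 t]

lemma hasDerivAt_tilt (hp0 : 0 ≤ p) (hp1 : p < 1) (t : ℝ) :
    HasDerivAt (tilt p) (tilt p t * (1 - tilt p t)) t := by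
  have hM := (bernoulliMGF_pos hp0 hp1 t).ne'
  refine (((hasDerivAt_exp t).const_mul p).div (hasDerivAt_bernoulliMGF p t) hM).congr_deriv ?_
  rw [one_sub_tilt hp0 hp1, tilt]
  field_simp
  rw [bernoulliMGF]
  ring

lemma hasDerivAt_gap (hp0 : 0 ≤ p) (hp1 : p < 1) (C t : ℝ) :
    HasDerivAt (gap p C) (gapDeriv p C t) t := by
  have hlog := (hasDerivAt_bernoulliMGF p t).log (bernoulliMGF_pos hp0 hp1 t).ne'
  have hquad : HasDerivAt (fun s => C * s ^ 2 + p * s) (C * (2 * t) + p) t := by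
    simpa using ((hasDerivAt_pow 2 t).const_mul C).fun_add ((hasDerivAt_id t).const_mul p)
  refine (hquad.fun_sub hlog).congr_deriv ?_
  rw [gapDeriv, tilt]
  ring

lemma hasDerivAt_gapDeriv (hp0 : 0 ≤ p) (hp1 : p < 1) (C t : ℝ) :
    HasDerivAt (gapDeriv p C) (2 * C - tilt p t * (1 - tilt p t)) t := by
  have hlin : HasDerivAt (fun s => 2 * C * s + p) (2 * C) t := by
    simpa using ((hasDerivAt_id t).const_mul (2 * C)).add_const p
  exact hlin.sub (hasDerivAt_tilt hp0 hp1 t)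

lemma gap_two_mul_logOdds_sub (hp0 : 0 < p) (hp1 : p < 1) {C : ℝ}
    (hC : 4 * C * logOdds p = 1 - 2 * p) (t : ℝ) :
    gap p C (2 * logOdds p - t) = gap p C t := by
  rw [gap, gap, bernoulliMGF_two_mul_logOdds_sub hp0 hp1,
    log_mul (exp_pos _).ne' (bernoulliMGF_pos hp0.le hp1 t).ne', log_exp]
  linear_combination (logOdds p - t) * hC

lemma concaveOn_gapDeriv (hp0 : 0 < p) (hp1 : p < 1) (C : ℝ) :
    ConcaveOn ℝ (Iic (logOdds p)) (gapDeriv p C) := by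
  have hd := hasDerivAt_gapDeriv hp0.le hp1 C
  refine AntitoneOn.concaveOn_of_deriv (convex_Iic _)
    (fun t _ => (hd t).continuousAt.continuousWithinAt)
    (fun t _ => (hd t).differentiableAt.differentiableWithinAt) ?_
  intro s hs t ht hst
  rw [interior_Iic] at hs ht
  rw [(hd s).deriv, (hd t).deriv]
  -- `q (1 - q) = 1/4 - (q - 1/2)²` grows with `q` as long as `q ≤ 1/2`
  have hqt : tilt p t ≤ 1 / 2 := tilt_logOdds hp0 hp1 ▸ tilt_monotone hp0.le hp1 ht.le
  nlinarith [tilt_monotone hp0.le hp1 hst]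

lemma gap_nonneg_of_le_logOdds (hp0 : 0 < p) (hp2 : p < 1 / 2) {C : ℝ}
    (hC : 4 * C * logOdds p = 1 - 2 * p) {t : ℝ} (ht : t ≤ logOdds p) : 0 ≤ gap p C t := by
  have hp1 : p < 1 := by linarith
  have hL : 0 < logOdds p := log_pos ((one_lt_div hp0).2 (by linarith))
  have hconc := concaveOn_gapDeriv hp0 hp1 C
  have hg0 : gapDeriv p C 0 = 0 := by simp [gapDeriv, tilt_zero]
  have hgL : gapDeriv p C (logOdds p) = 0 := by
    rw [gapDeriv, tilt_logOdds hp0 hp1]; linear_combination hC / 2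
  have hF0 : gap p C 0 = 0 := by simp [gap, bernoulliMGF_zero]
  have hd := hasDerivAt_gap hp0.le hp1 C
  have hcont : Continuous (gap p C) := continuous_iff_continuousAt.2 fun s => (hd s).continuousAt
  rcases le_total t 0 with ht0 | ht0
  · have hanti : AntitoneOn (gap p C) (Iic 0) := by
      refine antitoneOn_of_hasDerivWithinAt_nonpos (convex_Iic 0) hcont.continuousOn
        (fun s _ => (hd s).hasDerivWithinAt) fun s hs => ?_
      rw [interior_Iic] at hs
      rw [← hg0]
      exact hconc.left_le_of_le_right'' (mem_Iic.2 (hs.le.trans hL.le)) (mem_Iic.2 le_rfl) hs.le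
        hL (by rw [hg0, hgL])
    simpa [hF0] using hanti ht0 (mem_Iic.2 le_rfl) ht0
  · have hmono : MonotoneOn (gap p C) (Icc 0 (logOdds p)) := by
      refine monotoneOn_of_hasDerivWithinAt_nonneg (convex_Icc _ _) hcont.continuousOn
        (fun s _ => (hd s).hasDerivWithinAt) fun s hs => ?_
      rw [interior_Icc] at hs
      have := hconc.ge_on_segment (mem_Iic.2 hL.le) (mem_Iic.2 le_rfl)
        (segment_eq_Icc hL.le ▸ Ioo_subset_Icc_self hs)
      rwa [hg0, hgL, min_self] at this
    simpa [hF0] using hmono (left_mem_Icc.2 hL.le) ⟨ht0, ht⟩ ht0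

lemma gap_nonneg (hp0 : 0 < p) (hp2 : p < 1 / 2) {C : ℝ}
    (hC : 4 * C * logOdds p = 1 - 2 * p) (t : ℝ) : 0 ≤ gap p C t := by
  rcases le_total t (logOdds p) with ht | ht
  · exact gap_nonneg_of_le_logOdds hp0 hp2 hC ht
  · rw [← gap_two_mul_logOdds_sub hp0 (by linarith) hC]
    exact gap_nonneg_of_le_logOdds hp0 hp2 hC (by linarith)

lemma centeredMGF_eq (p t : ℝ) : centeredMGF p t = exp (-(t * p)) * bernoulliMGF p t := by
  have h : exp (t * (1 - p)) = exp (-(t * p)) * exp t := by rw [← exp_add]; ring_nf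
  rw [centeredMGF, bernoulliMGF, h, neg_mul]
  ring

lemma centeredMGF_one_sub (p t : ℝ) : centeredMGF (1 - p) (-t) = centeredMGF p t := by
  rw [centeredMGF, centeredMGF]
  ring_nf

lemma logOdds_one_sub (p : ℝ) : logOdds (1 - p) = -logOdds p := by
  rw [logOdds, logOdds, sub_sub_cancel, ← log_inv, inv_div]

lemma centeredMGF_le_of_lt_half (hp0 : 0 < p) (hp2 : p < 1 / 2) (t : ℝ) :
    centeredMGF p t ≤ exp ((1 - 2 * p) / (4 * logOdds p) * t ^ 2) := by
  set C := (1 - 2 * p) / (4 * logOdds p)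
  have hL : 0 < logOdds p := log_pos ((one_lt_div hp0).2 (by linarith))
  have hC : 4 * C * logOdds p = 1 - 2 * p := by
    simp only [C]; field_simp
  have hM : bernoulliMGF p t ≤ exp (C * t ^ 2 + p * t) := by
    rw [← log_le_iff_le_exp (bernoulliMGF_pos hp0.le (by linarith) t)]
    have := gap_nonneg hp0 hp2 hC t
    rw [gap] at this
    linarith
  calc centeredMGF p t = exp (-(t * p)) * bernoulliMGF p t := centeredMGF_eq p t
    _ ≤ exp (-(t * p)) * exp (C * t ^ 2 + p * t) := by gcongr
    _ = exp (C * t ^ 2) := by rw [← exp_add]; ring_nf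

end KearnsSaul

end

/-- Kearns–Saul inequality: for `p ∈ (0,1)`, `p ≠ 1/2`, and all real `t`,
`(1-p)·e^{-tp} + p·e^{t(1-p)} ≤ exp((1-2p)/(4 log((1-p)/p)) · t²)`. -/
theorem kearns_saul (p t : ℝ) (hp0 : 0 < p) (hp1 : p < 1) (hp : p ≠ 1/2) :
    (1 - p) * Real.exp (-t * p) + p * Real.exp (t * (1 - p)) ≤
      Real.exp ((1 - 2*p) / (4 * Real.log ((1 - p) / p)) * t^2) := by
  rcases lt_or_gt_of_ne hp with hp2 | hp2
  · exact KearnsSaul.centeredMGF_le_of_lt_half hp0 hp2 t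
  · have h := KearnsSaul.centeredMGF_le_of_lt_half (sub_pos.2 hp1) (by linarith) (-t)
    rw [KearnsSaul.centeredMGF_one_sub, KearnsSaul.logOdds_one_sub] at h
    refine h.trans_eq (congrArg exp ?_)
    rw [KearnsSaul.logOdds]
    ring
end

section
/- (Optimality of the Kearns–Saul inequality) For every p ∈ (0,1) with p ≠ 1/2, equality holds in the Kearns–Saul inequality at t* = 2·log((1−p)/p): that is, (1−p)·exp(−t*·p) + p·exp(t*·(1−p)) = exp( (1−2p)·(t*)² / (4·log((1−p)/p)) ). -/
/-- Optimality of the Kearns–Saul inequality: equality holds at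
`t* = 2·log((1-p)/p)`. -/
theorem kearns_saul_optimal (p : ℝ) (hp0 : 0 < p) (hp1 : p < 1) (hp : p ≠ 1/2) :
    (1 - p) * Real.exp (-(2 * Real.log ((1 - p) / p)) * p)
      + p * Real.exp ((2 * Real.log ((1 - p) / p)) * (1 - p)) =
    Real.exp ((1 - 2*p) * (2 * Real.log ((1 - p) / p))^2
      / (4 * Real.log ((1 - p) / p))) := by
  have h1 : (0:ℝ) < 1 - p := by linarith
  have hr : 0 < (1 - p) / p := div_pos h1 hp0
  set L := Real.log ((1 - p) / p) with hLdef
  have hrne : (1 - p) / p ≠ 1 := by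
    intro h
    have : 1 - p = p := by field_simp at h; linarith
    apply hp; linarith
  have hL : L ≠ 0 := by
    rw [hLdef]
    exact Real.log_ne_zero_of_pos_of_ne_one hr hrne
  have heL : Real.exp L = (1 - p) / p := Real.exp_log hr
  have heLn : Real.exp (-L) = p / (1 - p) := by
    rw [Real.exp_neg, heL, inv_div]
  have e1 : Real.exp (-(2*L)*p) = Real.exp ((1-2*p)*L) * Real.exp (-L) := by
    rw [← Real.exp_add]; congr 1; ring
  have e2 : Real.exp ((2*L)*(1-p)) = Real.exp ((1-2*p)*L) * Real.exp L := by
    rw [← Real.exp_add]; congr 1; ring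
  have hexp : (1 - 2*p) * (2*L)^2 / (4*L) = (1-2*p)*L := by
    field_simp; ring
  rw [hexp, e1, e2, heL, heLn]
  have hpne : p ≠ 0 := ne_of_gt hp0
  have h1ne : (1:ℝ) - p ≠ 0 := ne_of_gt h1
  field_simp
  ring
end

section
/- For every p ∈ (0,1) with p ≠ 1/2, the Kearns–Saul exponent is strictly smaller than the Hoeffding exponent: (1−2p) / (4·log((1−p)/p)) < 1/8. -/
/-!
Put `x = 1 - 2p`, so that `(1 - p) / p = (1 + x) / (1 - x)`. The series
`log (1 + x) - log (1 - x) = ∑ 2 x^(2k+1) / (2k+1)` has first term `2x` and all further terms of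
the sign of `x`, hence `x · log ((1 - p) / p) > 2 x²` for `x ≠ 0`, which is the claim.
-/

open Real

theorem two_mul_sq_lt_mul_log_sub_log {x : ℝ} (hx0 : x ≠ 0) (hx1 : |x| < 1) :
    2 * x ^ 2 < x * (log (1 + x) - log (1 - x)) := by
  have hseries := (hasSum_log_sub_log_of_abs_lt_one hx1).mul_left x
  have hterm (k : ℕ) : x * (2 * (1 / (2 * k + 1)) * x ^ (2 * k + 1)) =
      2 / (2 * k + 1) * (x ^ 2) ^ (k + 1) := by ring
  simp only [hterm] at hseries
  refine hasSum_lt (f := fun k => if k = 0 then 2 * x ^ 2 else 0) (i := 1) (fun k => ?_) ?_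
    (hasSum_ite_eq 0 _) hseries
  · dsimp only
    split_ifs with hk
    · simp [hk]
    · positivity
  · simp only [one_ne_zero, if_false]
    positivity

theorem div_four_mul_log_lt_one_div_eight {x : ℝ} (hx0 : x ≠ 0) (hx1 : |x| < 1) :
    x / (4 * log ((1 + x) / (1 - x))) < 1 / 8 := by
  obtain ⟨hlo, hhi⟩ := abs_lt.mp hx1
  rw [log_div (by linarith) (by linarith)]
  set L := log (1 + x) - log (1 - x)
  have hkey := two_mul_sq_lt_mul_log_sub_log hx0 hx1
  have hxL : 0 < x * L := lt_trans (by positivity) hkey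
  have hL : L ≠ 0 := by rintro h; simp [h] at hxL
  rw [show x / (4 * L) = x ^ 2 / (4 * (x * L)) by field_simp, div_lt_iff₀ (by positivity)]
  linarith

/-- For `p ∈ (0,1)`, `p ≠ 1/2`, the Kearns–Saul exponent is strictly smaller
than the Hoeffding exponent `1/8`. -/
theorem kearns_saul_lt_hoeffding (p : ℝ) (hp0 : 0 < p) (hp1 : p < 1) (hp : p ≠ 1/2) :
    (1 - 2*p) / (4 * Real.log ((1 - p) / p)) < 1/8 := by
  have hratio : (1 - p) / p = (1 + (1 - 2 * p)) / (1 - (1 - 2 * p)) := by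
    field_simp
    ring
  rw [hratio]
  refine div_four_mul_log_lt_one_div_eight ?_ (abs_lt.mpr ⟨by linarith, by linarith⟩)
  contrapose! hp
  linarith
end

section
/- For every p ∈ (0,1) with p ≠ 1/2, the function g(t) = (1/t²)·log( (1−p)·exp(−t·p) + p·exp(t·(1−p)) ), defined for t ≠ 0, has derivative zero at t* = 2·log((1−p)/p): g′(t*) = 0. -/
/-!
Write `f(t) = (1-p)e^{-tp} + p e^{t(1-p)}` and `r = (1-p)/p`, so that `t* = 2 log r`.
Since `e^{-2sp} = e^{(1-2p)s}/e^s` and `e^{2s(1-p)} = e^{(1-2p)s} e^s`, at `s = log r` one gets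
`f(t*) = e^{(1-2p) log r}` and `f'(t*) = (1-2p) f(t*)`. Hence `L = log f` satisfies
`t* L'(t*) = 2 (1-2p) log r = 2 L(t*)`, which is exactly the vanishing of `(L/t²)' = (t L' - 2L)/t³`.
-/

open Real

theorem HasDerivAt.one_div_sq_mul_eq_zero {h : ℝ → ℝ} {h' t : ℝ} (hh : HasDerivAt h h' t)
    (ht : t ≠ 0) (hcrit : t * h' = 2 * h t) :
    HasDerivAt (fun x => 1 / x ^ 2 * h x) 0 t := by
  have hinv : HasDerivAt (fun x : ℝ => 1 / x ^ 2) (-(2 * t) / (t ^ 2) ^ 2) t := by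
    simpa [one_div] using (hasDerivAt_pow 2 t).fun_inv (pow_ne_zero 2 ht)
  refine (hinv.fun_mul hh).congr_deriv ?_
  calc -(2 * t) / (t ^ 2) ^ 2 * h t + 1 / t ^ 2 * h' = (t * h' - 2 * h t) / t ^ 3 := by
        field_simp; ring
    _ = 0 := by rw [hcrit, sub_self, zero_div]

noncomputable def centeredBernoulliMGF (p t : ℝ) : ℝ :=
  (1 - p) * exp (-t * p) + p * exp (t * (1 - p))

theorem hasDerivAt_centeredBernoulliMGF (p t : ℝ) :
    HasDerivAt (centeredBernoulliMGF p)
      (p * (1 - p) * (exp (t * (1 - p)) - exp (-t * p))) t := by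
  have hneg : HasDerivAt (fun x : ℝ => -x * p) (-p) t := by
    simpa using (hasDerivAt_id t).neg.mul_const p
  have hpos : HasDerivAt (fun x : ℝ => x * (1 - p)) (1 - p) t := by
    simpa using (hasDerivAt_id t).mul_const (1 - p)
  exact ((hneg.exp.const_mul (1 - p)).fun_add (hpos.exp.const_mul p)).congr_deriv (by ring)

theorem exp_neg_two_mul_mul (s p : ℝ) : exp (-(2 * s) * p) = exp ((1 - 2 * p) * s) / exp s := by
  rw [← exp_sub]; ring_nf

theorem exp_two_mul_mul_one_sub (s p : ℝ) :
    exp (2 * s * (1 - p)) = exp ((1 - 2 * p) * s) * exp s := by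
  rw [← exp_add]; ring_nf

theorem centeredBernoulliMGF_two_mul_log {p : ℝ} (hp0 : 0 < p) (hp1 : p < 1) :
    centeredBernoulliMGF p (2 * log ((1 - p) / p)) = exp ((1 - 2 * p) * log ((1 - p) / p)) := by
  have hr : exp (log ((1 - p) / p)) = (1 - p) / p := exp_log (by apply div_pos <;> linarith)
  rw [centeredBernoulliMGF, exp_neg_two_mul_mul, exp_two_mul_mul_one_sub, hr]
  have : 1 - p ≠ 0 := by linarith
  field_simp
  ring

theorem hasDerivAt_log_centeredBernoulliMGF_two_mul_log {p : ℝ} (hp0 : 0 < p) (hp1 : p < 1) :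
    HasDerivAt (fun t => log (centeredBernoulliMGF p t)) (1 - 2 * p) (2 * log ((1 - p) / p)) := by
  have hr : exp (log ((1 - p) / p)) = (1 - p) / p := exp_log (by apply div_pos <;> linarith)
  have hval := centeredBernoulliMGF_two_mul_log hp0 hp1
  have hne : exp ((1 - 2 * p) * log ((1 - p) / p)) ≠ 0 := (exp_pos _).ne'
  refine ((hasDerivAt_centeredBernoulliMGF p _).log (hval ▸ hne)).congr_deriv ?_
  rw [hval, exp_neg_two_mul_mul, exp_two_mul_mul_one_sub, hr]
  have : 1 - p ≠ 0 := by linarith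
  field_simp
  ring

/-- The function `g(t) = t⁻² log((1-p)e^{-tp} + p e^{t(1-p)})` has derivative zero
at `t* = 2 log((1-p)/p)`. -/
theorem deriv_g_at_tstar (p : ℝ) (hp0 : 0 < p) (hp1 : p < 1) (hp : p ≠ 1/2) :
    HasDerivAt
      (fun t : ℝ => (1 / t^2) *
        Real.log ((1 - p) * Real.exp (-t * p) + p * Real.exp (t * (1 - p))))
      0 (2 * Real.log ((1 - p) / p)) := by
  have hr : 0 < (1 - p) / p := div_pos (by linarith) hp0
  have hr1 : (1 - p) / p ≠ 1 := fun h => hp (by rw [div_eq_one_iff_eq hp0.ne'] at h; linarith)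
  have htstar : 2 * log ((1 - p) / p) ≠ 0 :=
    mul_ne_zero two_ne_zero (log_ne_zero_of_pos_of_ne_one hr hr1)
  refine (hasDerivAt_log_centeredBernoulliMGF_two_mul_log hp0 hp1).one_div_sq_mul_eq_zero
    htstar ?_
  rw [centeredBernoulliMGF_two_mul_log hp0 hp1, log_exp]
  ring
end

section
/- For every real s and every p ∈ (0,1), one has s·(s + 2p·(1−s))·log((1−p)/p) − log( (1−p) + p·((1−p)/p)^{2s} ) ≥ 0. -/
/-!
Put `a = artanh (1 - 2p) = log ((1 - p) / p) / 2`, so that `tanh a = 1 - 2p` and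
`(1 - p) + p e^{4sa} = e^{2sa} cosh ((2s - 1) a) / cosh a`. With `t = 2s - 1` the inequality becomes
the sharp (Kearns–Saul) sub-Gaussian bound `log cosh (t a) ≤ log cosh a + a tanh a (t² - 1) / 2`.
For `a, t ≥ 0` the difference of the two sides has `t`-derivative `a (tanh (t a) - t tanh a)`,
which by concavity of `tanh` on `[0, ∞)` (and `tanh 0 = 0`) is `≥ 0` for `t ≤ 1` and `≤ 0` for
`t ≥ 1`; so the difference is maximal at `t = 1`, where it vanishes.
-/

open Real Set

lemma hasDerivAt_tanh (x : ℝ) : HasDerivAt tanh (1 / cosh x ^ 2) x := by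
  have h := (hasDerivAt_sinh x).div (hasDerivAt_cosh x) (cosh_pos x).ne'
  rw [show (tanh : ℝ → ℝ) = fun y => sinh y / cosh y from funext tanh_eq_sinh_div_cosh]
  exact h.congr_deriv (by rw [← cosh_sq_sub_sinh_sq x]; ring)

lemma concaveOn_tanh : ConcaveOn ℝ (Ici 0) tanh := by
  have hderiv : deriv tanh = fun x => 1 / cosh x ^ 2 := funext fun x => (hasDerivAt_tanh x).deriv
  refine AntitoneOn.concaveOn_of_deriv (convex_Ici 0)
    (fun x _ => (hasDerivAt_tanh x).continuousAt.continuousWithinAt)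
    (fun x _ => (hasDerivAt_tanh x).differentiableAt.differentiableWithinAt) ?_
  rw [interior_Ici, hderiv]
  intro x hx y hy hxy
  have hcosh : cosh x ≤ cosh y := cosh_le_cosh.2 (by rw [abs_of_pos hx, abs_of_pos hy]; exact hxy)
  dsimp only
  gcongr

lemma mul_tanh_le_tanh_mul {a t : ℝ} (ha : 0 ≤ a) (ht₀ : 0 ≤ t) (ht₁ : t ≤ 1) :
    t * tanh a ≤ tanh (t * a) := by
  have h := concaveOn_tanh.2 (mem_Ici.2 le_rfl) (mem_Ici.2 ha) (sub_nonneg.2 ht₁) ht₀ (by ring)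
  simpa using h

lemma tanh_mul_le_mul_tanh {a t : ℝ} (ha : 0 ≤ a) (ht : 1 ≤ t) :
    tanh (t * a) ≤ t * tanh a := by
  have ht₀ : 0 < t := by linarith
  have h := mul_tanh_le_tanh_mul (mul_nonneg ht₀.le ha) (inv_nonneg.2 ht₀.le)
    (inv_le_one_of_one_le₀ ht)
  rw [inv_mul_cancel_left₀ ht₀.ne'] at h
  rwa [inv_mul_le_iff₀ ht₀] at h

lemma log_cosh_mul_le_of_nonneg {a t : ℝ} (ha : 0 ≤ a) (ht : 0 ≤ t) :
    log (cosh (t * a)) ≤ log (cosh a) + a * tanh a / 2 * (t ^ 2 - 1) := by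
  set h : ℝ → ℝ := fun u => log (cosh (u * a)) - a * tanh a / 2 * u ^ 2 with h_def
  have hderiv (u : ℝ) : HasDerivAt h (a * (tanh (u * a) - u * tanh a)) u := by
    have hc := (((hasDerivAt_id u).mul_const a).cosh).log (cosh_pos _).ne'
    have hp := (hasDerivAt_pow 2 u).const_mul (a * tanh a / 2)
    refine (hc.sub hp).congr_deriv ?_
    simp only [id, tanh_eq_sinh_div_cosh]
    ring
  have hcont : Continuous h := continuous_iff_continuousAt.2 fun u => (hderiv u).continuousAt
  suffices h t ≤ h 1 by simp only [h_def, one_mul, one_pow] at this; linarith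
  rcases le_total t 1 with ht₁ | ht₁
  · refine monotoneOn_of_hasDerivWithinAt_nonneg (convex_Icc 0 1) hcont.continuousOn
      (fun u _ => (hderiv u).hasDerivWithinAt) (fun u hu => ?_)
      ⟨ht, ht₁⟩ ⟨zero_le_one, le_rfl⟩ ht₁
    rw [interior_Icc] at hu
    exact mul_nonneg ha (sub_nonneg.2 (mul_tanh_le_tanh_mul ha hu.1.le hu.2.le))
  · refine antitoneOn_of_hasDerivWithinAt_nonpos (convex_Ici 1) hcont.continuousOn
      (fun u _ => (hderiv u).hasDerivWithinAt) (fun u hu => ?_) (mem_Ici.2 le_rfl) ht₁ ht₁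
    rw [interior_Ici] at hu
    exact mul_nonpos_of_nonneg_of_nonpos ha (sub_nonpos.2 (tanh_mul_le_mul_tanh ha hu.le))

lemma log_cosh_mul_le (a t : ℝ) :
    log (cosh (t * a)) ≤ log (cosh a) + a * tanh a / 2 * (t ^ 2 - 1) := by
  have h := log_cosh_mul_le_of_nonneg (abs_nonneg a) (abs_nonneg t)
  have habs : |a| * tanh |a| = a * tanh a := by
    rcases abs_cases a with ⟨h, _⟩ | ⟨h, _⟩ <;> simp [h, tanh_neg]
  rwa [← abs_mul, cosh_abs, cosh_abs, sq_abs, habs] at h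

lemma one_sub_add_mul_exp_eq {p a : ℝ} (h : tanh a = 1 - 2 * p) (s : ℝ) :
    1 - p + p * exp (4 * s * a) = exp (2 * s * a) * cosh ((2 * s - 1) * a) / cosh a := by
  have hsinh : sinh a = (1 - 2 * p) * cosh a := by
    rw [← h, tanh_eq_sinh_div_cosh, div_mul_cancel₀ _ (cosh_pos a).ne']
  have hp : 2 * p * cosh a = exp (-a) := by rw [← cosh_sub_sinh, hsinh]; ring
  have hq : 2 * (1 - p) * cosh a = exp a := by rw [← cosh_add_sinh, hsinh]; ring
  rw [eq_div_iff (cosh_pos a).ne', cosh_eq ((2 * s - 1) * a)]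
  calc (1 - p + p * exp (4 * s * a)) * cosh a = (exp a + exp (-a) * exp (4 * s * a)) / 2 := by
        linear_combination (hq + exp (4 * s * a) * hp) / 2
    _ = exp (2 * s * a) * ((exp ((2 * s - 1) * a) + exp (-((2 * s - 1) * a))) / 2) := by
        rw [← exp_add, mul_div_assoc', mul_add, ← exp_add, ← exp_add]
        ring_nf

/-- For every real `s` and `p ∈ (0,1)`,
`s(s + 2p(1-s)) log((1-p)/p) - log((1-p) + p((1-p)/p)^{2s}) ≥ 0`. -/
theorem h_s_nonneg (s p : ℝ) (hp0 : 0 < p) (hp1 : p < 1) :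
    s * (s + 2*p*(1 - s)) * Real.log ((1 - p) / p)
      - Real.log ((1 - p) + p * ((1 - p) / p) ^ (2*s)) ≥ 0 := by
  obtain ⟨a, htanh, hlog⟩ : ∃ a, tanh a = 1 - 2 * p ∧ log ((1 - p) / p) = 2 * a := by
    have hmem : 1 - 2 * p ∈ Ioo (-1) 1 := ⟨by linarith, by linarith⟩
    refine ⟨artanh (1 - 2 * p), tanh_artanh hmem, ?_⟩
    rw [artanh_eq_half_log (Ioo_subset_Icc_self hmem)]
    ring_nf
  have hpow : ((1 - p) / p) ^ (2 * s) = exp (4 * s * a) := by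
    rw [rpow_def_of_pos (div_pos (sub_pos.2 hp1) hp0), hlog]
    ring_nf
  have hmgf : log (1 - p + p * exp (4 * s * a))
      = 2 * s * a + log (cosh ((2 * s - 1) * a)) - log (cosh a) := by
    rw [one_sub_add_mul_exp_eq htanh, log_div (by positivity) (cosh_pos a).ne',
      log_mul (exp_pos _).ne' (cosh_pos _).ne', log_exp]
  have hbound := log_cosh_mul_le a (2 * s - 1)
  rw [htanh] at hbound
  rw [hpow, hlog, hmgf]
  linear_combination hbound
end

section
/- For every real s, the function h_s(p) = s·(s + 2p·(1−s))·log((1−p)/p) − log( (1−p) + p·((1−p)/p)^{2s} ) is convex on the open interval (0,1). -/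
/-!
With `r = (1 - p) / p`, the second logarithm splits as `log (1 - p) + log (1 + r ^ (2s - 1))`,
and `r ^ (2s - 1) = exp ((2s - 1) log r)`, so `h_s` is built from `log r`, `log (1 - p)` and the
softplus `x ↦ log (1 + eˣ)`, whose derivative is the sigmoid `σ`. Differentiating twice, all terms
collapse into the perfect square `h_s'' = ((s - p - (2s - 1) σ((2s - 1) log r)) / (p (1 - p)))²`.
-/

open Real Set

lemma convexOn_of_hasDerivAt2_nonneg {D : Set ℝ} (hD : Convex ℝ D) (hDo : IsOpen D)
    {f f' f'' : ℝ → ℝ} (hf' : ∀ x ∈ D, HasDerivAt f (f' x) x)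
    (hf'' : ∀ x ∈ D, HasDerivAt f' (f'' x) x) (hf''₀ : ∀ x ∈ D, 0 ≤ f'' x) :
    ConvexOn ℝ D f := by
  refine convexOn_of_hasDerivWithinAt2_nonneg (f' := f') (f'' := f'') hD
    (fun x hx ↦ (hf' x hx).continuousAt.continuousWithinAt) ?_ ?_ ?_ <;> rw [hDo.interior_eq]
  · exact fun x hx ↦ (hf' x hx).hasDerivWithinAt
  · exact fun x hx ↦ (hf'' x hx).hasDerivWithinAt
  · exact hf''₀

lemma hasDerivAt_log_one_add_exp (x : ℝ) :
    HasDerivAt (fun y ↦ log (1 + exp y)) (sigmoid x) x := by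
  convert ((hasDerivAt_exp x).const_add 1).log (by positivity) using 1
  rw [sigmoid_def, exp_neg]
  field_simp
  ring

lemma hasDerivAt_log_one_sub_div {p : ℝ} (hp : p ∈ Ioo 0 1) :
    HasDerivAt (fun x ↦ log ((1 - x) / x)) (-(p * (1 - p))⁻¹) p := by
  obtain ⟨hp0, hp1⟩ := hp
  have h1p : 1 - p ≠ 0 := by linarith
  refine ((((hasDerivAt_id' p).const_sub 1).div (hasDerivAt_id' p) hp0.ne').log
    (div_ne_zero h1p hp0.ne')).congr_deriv ?_
  simp only [Pi.div_apply]
  field_simp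
  ring

lemma log_one_sub_add_mul_rpow {p : ℝ} (hp : p ∈ Ioo 0 1) (s : ℝ) :
    log ((1 - p) + p * ((1 - p) / p) ^ (2 * s))
      = log (1 - p) + log (1 + exp ((2 * s - 1) * log ((1 - p) / p))) := by
  obtain ⟨hp0, hp1⟩ := hp
  have h1p : 0 < 1 - p := by linarith
  have hr : 0 < (1 - p) / p := div_pos h1p hp0
  rw [← log_mul h1p.ne' (by positivity), mul_comm _ (log _), ← rpow_def_of_pos hr,
    rpow_sub hr, rpow_one]
  congr 1
  field_simp

noncomputable def hFun (s p : ℝ) : ℝ :=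
  s * (s + 2 * p * (1 - s)) * log ((1 - p) / p) - log (1 - p)
    - log (1 + exp ((2 * s - 1) * log ((1 - p) / p)))

noncomputable def hFunDeriv (s p : ℝ) : ℝ :=
  2 * s * (1 - s) * log ((1 - p) / p)
    + (p - s * (s + 2 * p * (1 - s)) + (2 * s - 1) * sigmoid ((2 * s - 1) * log ((1 - p) / p)))
      / (p * (1 - p))

lemma hasDerivAt_hFun (s : ℝ) {p : ℝ} (hp : p ∈ Ioo 0 1) :
    HasDerivAt (hFun s) (hFunDeriv s p) p := by
  have hL := hasDerivAt_log_one_sub_div hp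
  obtain ⟨hp0, hp1⟩ := hp
  have h1p : 1 - p ≠ 0 := by linarith
  have hc : HasDerivAt (fun x ↦ s * (s + 2 * x * (1 - s))) (s * (2 * (1 - s))) p :=
    (((hasDerivAt_id' p).const_mul 2).mul_const (1 - s)).const_add s |>.const_mul s
      |>.congr_deriv (by ring)
  have := ((hc.mul hL).sub ((hasDerivAt_id' p).const_sub 1 |>.log h1p)).sub
    ((hasDerivAt_log_one_add_exp _).comp p (hL.const_mul (2 * s - 1)))
  refine this.congr_deriv ?_
  rw [hFunDeriv]
  field_simp
  ring

lemma hasDerivAt_hFunDeriv (s : ℝ) {p : ℝ} (hp : p ∈ Ioo 0 1) :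
    HasDerivAt (hFunDeriv s)
      (((s - p - (2 * s - 1) * sigmoid ((2 * s - 1) * log ((1 - p) / p))) / (p * (1 - p))) ^ 2)
      p := by
  have hL := hasDerivAt_log_one_sub_div hp
  obtain ⟨hp0, hp1⟩ := hp
  have h1p : 1 - p ≠ 0 := by linarith
  have hσ := (hasDerivAt_sigmoid _).comp p (hL.const_mul (2 * s - 1))
  have hc : HasDerivAt (fun x ↦ s * (s + 2 * x * (1 - s))) (s * (2 * (1 - s))) p :=
    (((hasDerivAt_id' p).const_mul 2).mul_const (1 - s)).const_add s |>.const_mul s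
      |>.congr_deriv (by ring)
  have hN : HasDerivAt (fun x ↦ x - s * (s + 2 * x * (1 - s))) (1 - s * (2 * (1 - s))) p :=
    (hasDerivAt_id' p).sub hc
  have hq : HasDerivAt (fun x ↦ x * (1 - x)) (1 - 2 * p) p := by
    refine ((hasDerivAt_id' p).mul ((hasDerivAt_id' p).const_sub 1)).congr_deriv ?_
    ring
  have := (hL.const_mul (2 * s * (1 - s))).add
    ((hN.add (hσ.const_mul (2 * s - 1))).div hq (mul_ne_zero hp0.ne' h1p))
  refine this.congr_deriv ?_
  simp only [Pi.add_apply, Function.comp_apply]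
  generalize sigmoid ((2 * s - 1) * log ((1 - p) / p)) = σ
  field_simp
  ring

/-- For every real `s`, the function
`h_s(p) = s(s + 2p(1-s)) log((1-p)/p) - log((1-p) + p((1-p)/p)^{2s})`
is convex on `(0,1)`. -/
theorem h_s_convex (s : ℝ) :
    ConvexOn ℝ (Set.Ioo (0:ℝ) 1)
      (fun p : ℝ => s * (s + 2*p*(1 - s)) * Real.log ((1 - p) / p)
        - Real.log ((1 - p) + p * ((1 - p) / p) ^ (2*s))) := by
  refine (convexOn_of_hasDerivAt2_nonneg (convex_Ioo 0 1) isOpen_Ioo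
    (fun p hp ↦ hasDerivAt_hFun s hp) (fun p hp ↦ hasDerivAt_hFunDeriv s hp)
    (fun p _ ↦ sq_nonneg _)).congr ?_
  intro p hp
  simp only [hFun, log_one_sub_add_mul_rpow hp]
  ring
end

section
/- (Refined Kearns–Saul inequality for p ≥ 1/2) For every p ∈ [1/2,1] and every t ≥ 0, one has (1−p)·exp(−t·p) + p·exp(t·(1−p)) ≤ exp( p·(1−p)·t²/2 ). -/
/-!
With `q = 1 - p`, the left-hand side `m(t) = q e^{-tp} + p e^{tq}` is the moment generating function of
a centred Bernoulli variable; it has `m(0) = 1` and `m'(t) = pq (e^{tq} - e^{-tp})`, while the right-hand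
side `g(t) = e^{pqt²/2}` has `g(0) = 1` and `g'(t) = pq t g(t)`. So it suffices that
`e^{tq} - e^{-tp} ≤ t e^{pqt²/2}` for `t ≥ 0`. For `pt ≥ 2` this holds because then `tq ≤ pqt²/2`.
For `pt ≤ 2` write `e^{tq} - e^{-tp} = e^{-tp} (e^t - 1)` and use `e^t - 1 = 2 e^{t/2} sinh (t/2)` with
`sinh x ≤ x cosh x ≤ x e^{x²/2}`; with `s = 2p - 1 ∈ [0, 1]` the resulting exponent
`t²/8 - st/2` is at most `pqt²/2 = t²/8 - s²t²/8` exactly when `st ≤ 4`.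
-/

open Real

namespace Real

theorem sinh_le_mul_cosh {x : ℝ} (hx : 0 ≤ x) : sinh x ≤ x * cosh x := by
  have hB (y : ℝ) : HasDerivAt (fun y => y * cosh y) (cosh y + y * sinh y) y := by
    simpa using (hasDerivAt_id' y).fun_mul (hasDerivAt_cosh y)
  refine image_le_of_deriv_right_le_deriv_boundary (f := sinh) (B := fun y => y * cosh y)
    continuous_sinh.continuousOn (fun y _ => (hasDerivAt_sinh y).hasDerivWithinAt) (by simp)
    (by fun_prop) (fun y _ => (hB y).hasDerivWithinAt) (fun y hy => ?_) ⟨hx, le_rfl⟩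
  have := mul_nonneg hy.1 (sinh_nonneg_iff.2 hy.1)
  linarith

theorem sinh_le_mul_exp_sq_div_two {x : ℝ} (hx : 0 ≤ x) : sinh x ≤ x * exp (x ^ 2 / 2) :=
  (sinh_le_mul_cosh hx).trans (mul_le_mul_of_nonneg_left (cosh_le_exp_half_sq x) hx)

theorem exp_sub_one_le_mul_exp {t : ℝ} (ht : 0 ≤ t) :
    exp t - 1 ≤ t * exp (t / 2 + t ^ 2 / 8) := by
  have hsq : exp (t / 2) * exp (t / 2) = exp t := by rw [← exp_add, add_halves]
  have hinv : exp (t / 2) * exp (-(t / 2)) = 1 := by rw [← exp_add, add_neg_cancel, exp_zero]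
  calc exp t - 1 = 2 * exp (t / 2) * sinh (t / 2) := by rw [sinh_eq]; linear_combination hinv - hsq
    _ ≤ 2 * exp (t / 2) * (t / 2 * exp ((t / 2) ^ 2 / 2)) := by
        gcongr; exact sinh_le_mul_exp_sq_div_two (by positivity)
    _ = t * exp (t / 2 + t ^ 2 / 8) := by rw [exp_add]; ring_nf

end Real

theorem exp_mul_one_sub_sub_exp_neg_mul_le {p t : ℝ} (hp0 : 1 / 2 ≤ p) (hp1 : p ≤ 1)
    (ht : 0 ≤ t) : exp (t * (1 - p)) - exp (-t * p) ≤ t * exp (p * (1 - p) * t ^ 2 / 2) := by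
  rcases le_total (p * t) 2 with hsmall | hlarge
  · have hexponent : -t * p + (t / 2 + t ^ 2 / 8) ≤ p * (1 - p) * t ^ 2 / 2 := by
      nlinarith [mul_nonneg (mul_nonneg ht (by linarith : 0 ≤ 2 * p - 1))
        (by nlinarith : 0 ≤ 4 - t * (2 * p - 1))]
    calc exp (t * (1 - p)) - exp (-t * p) = exp (-t * p) * (exp t - 1) := by
          rw [show t * (1 - p) = -t * p + t by ring, exp_add]; ring
      _ ≤ exp (-t * p) * (t * exp (t / 2 + t ^ 2 / 8)) := by
          gcongr; exact exp_sub_one_le_mul_exp ht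
      _ = t * exp (-t * p + (t / 2 + t ^ 2 / 8)) := by simp only [exp_add]; ring
      _ ≤ t * exp (p * (1 - p) * t ^ 2 / 2) := by gcongr
  · have hexponent : t * (1 - p) ≤ p * (1 - p) * t ^ 2 / 2 := by
      nlinarith [mul_nonneg (mul_nonneg (by linarith : 0 ≤ 1 - p) ht) (by linarith : 0 ≤ p * t - 2)]
    calc exp (t * (1 - p)) - exp (-t * p) ≤ exp (t * (1 - p)) := by linarith [exp_pos (-t * p)]
      _ ≤ exp (p * (1 - p) * t ^ 2 / 2) := exp_le_exp.2 hexponent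
      _ ≤ t * exp (p * (1 - p) * t ^ 2 / 2) :=
          le_mul_of_one_le_left (exp_pos _).le (by nlinarith)

theorem hasDerivAt_centered_bernoulli_mgf (p z : ℝ) :
    HasDerivAt (fun z => (1 - p) * exp (-z * p) + p * exp (z * (1 - p)))
      (p * (1 - p) * (exp (z * (1 - p)) - exp (-z * p))) z := by
  have hneg := ((hasDerivAt_neg z).mul_const p).exp.const_mul (1 - p)
  have hpos := ((hasDerivAt_id' z).mul_const (1 - p)).exp.const_mul p
  exact (hneg.fun_add hpos).congr_deriv (by ring)

theorem hasDerivAt_exp_mul_sq_div_two (c z : ℝ) :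
    HasDerivAt (fun z => exp (c * z ^ 2 / 2)) (c * z * exp (c * z ^ 2 / 2)) z :=
  (((hasDerivAt_pow 2 z).const_mul c).div_const 2).exp.congr_deriv (by norm_num; ring)

/-- Refined Kearns–Saul inequality: for `p ∈ [1/2,1]` and `t ≥ 0`,
`(1-p)e^{-tp} + p e^{t(1-p)} ≤ exp(p(1-p)t²/2)`. -/
theorem kearns_saul_refined (p t : ℝ) (hp0 : 1/2 ≤ p) (hp1 : p ≤ 1) (ht : 0 ≤ t) :
    (1 - p) * Real.exp (-t * p) + p * Real.exp (t * (1 - p)) ≤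
      Real.exp (p * (1 - p) * t^2 / 2) := by
  have hpq : 0 ≤ p * (1 - p) := mul_nonneg (by linarith) (by linarith)
  refine image_le_of_deriv_right_le_deriv_boundary
    (f := fun z => (1 - p) * exp (-z * p) + p * exp (z * (1 - p)))
    (B := fun z => exp (p * (1 - p) * z ^ 2 / 2)) (by fun_prop)
    (fun z _ => (hasDerivAt_centered_bernoulli_mgf p z).hasDerivWithinAt) (by simp) (by fun_prop)
    (fun z _ => (hasDerivAt_exp_mul_sq_div_two _ z).hasDerivWithinAt) (fun z hz => ?_) ⟨ht, le_rfl⟩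
  calc p * (1 - p) * (exp (z * (1 - p)) - exp (-z * p))
      ≤ p * (1 - p) * (z * exp (p * (1 - p) * z ^ 2 / 2)) :=
        mul_le_mul_of_nonneg_left (exp_mul_one_sub_sub_exp_neg_mul_le hp0 hp1 hz.1) hpq
    _ = p * (1 - p) * z * exp (p * (1 - p) * z ^ 2 / 2) := by ring
end

section
/- For every fixed t with 0 ≤ t < 4, the function p ↦ exp( p·t + p·(1−p)·t²/2 ) − ( (1−p) + p·exp(t) ) is concave on the interval [1/2,1]; equivalently, its second derivative in p, which equals (1/4)·exp( p·t·(2 + t − p·t)/2 )·(2p−1)·t³·( (2p−1)·t − 4 ), is non-positive on [1/2,1]. -/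
/-!
Write the function as `exp (g p) - ((1 - p) + p eᵗ)` with the quadratic exponent
`g p = p t + p (1 - p) t² / 2`. The affine part does not contribute to the second derivative, which
is therefore `exp (g p) * (g' p ^ 2 + g'') = exp (g p) * ((g' p - t) (g' p + t))`, and this factors
as `(1/4) exp (g p) (2p - 1) t³ ((2p - 1) t - 4)`. For `p ∈ [1/2, 1]` and `0 ≤ t < 4` the factor
`(2p - 1) t³` is non-negative while `(2p - 1) t - 4 ≤ t - 4 < 0`, so the function is concave.
-/

open Real Set

noncomputable def bernoulliMgfGap (t p : ℝ) : ℝ :=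
  exp (p*t + p*(1 - p)*t^2/2) - ((1 - p) + p * exp t)

noncomputable def bernoulliMgfGapDeriv (t p : ℝ) : ℝ :=
  exp (p*t + p*(1 - p)*t^2/2) * (t + (1 - 2*p)*t^2/2) - (exp t - 1)

noncomputable def bernoulliMgfGapDeriv2 (t p : ℝ) : ℝ :=
  (1/4) * exp (p*t*(2 + t - p*t)/2) * (2*p - 1) * t^3 * ((2*p - 1)*t - 4)

lemma hasDerivAt_exponent (t p : ℝ) :
    HasDerivAt (fun p : ℝ => p*t + p*(1 - p)*t^2/2) (t + (1 - 2*p)*t^2/2) p := by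
  have h := ((hasDerivAt_id p).mul_const t).add
    ((((hasDerivAt_id p).mul ((hasDerivAt_const p 1).sub (hasDerivAt_id p))).mul_const
      (t^2)).div_const 2)
  exact h.congr_deriv (by simp only [id_eq, Pi.sub_apply]; ring)

lemma hasDerivAt_bernoulliMgfGap (t p : ℝ) :
    HasDerivAt (bernoulliMgfGap t) (bernoulliMgfGapDeriv t p) p := by
  have h := (hasDerivAt_exponent t p).exp.sub
    (((hasDerivAt_const p 1).sub (hasDerivAt_id p)).add ((hasDerivAt_id p).mul_const (exp t)))
  exact h.congr_deriv (by simp only [bernoulliMgfGapDeriv]; ring)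

lemma hasDerivAt_bernoulliMgfGapDeriv (t p : ℝ) :
    HasDerivAt (bernoulliMgfGapDeriv t) (bernoulliMgfGapDeriv2 t p) p := by
  have hslope : HasDerivAt (fun p : ℝ => t + (1 - 2*p)*t^2/2) (-t^2) p := by
    have h := (hasDerivAt_const p t).add
      ((((hasDerivAt_const p 1).sub ((hasDerivAt_id p).const_mul 2)).mul_const (t^2)).div_const 2)
    exact h.congr_deriv (by ring)
  have h := ((hasDerivAt_exponent t p).exp.mul hslope).sub (hasDerivAt_const p (exp t - 1))
  refine h.congr_deriv ?_
  rw [bernoulliMgfGapDeriv2, show p*t*(2 + t - p*t)/2 = p*t + p*(1 - p)*t^2/2 by ring]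
  ring

lemma deriv_deriv_bernoulliMgfGap (t p : ℝ) :
    deriv (deriv (bernoulliMgfGap t)) p = bernoulliMgfGapDeriv2 t p := by
  have hderiv : deriv (bernoulliMgfGap t) = bernoulliMgfGapDeriv t :=
    funext fun p => (hasDerivAt_bernoulliMgfGap t p).deriv
  rw [hderiv, (hasDerivAt_bernoulliMgfGapDeriv t p).deriv]

lemma bernoulliMgfGapDeriv2_nonpos {t p : ℝ} (ht : 0 ≤ t) (hp : 1/2 ≤ p) (h : (2*p - 1)*t ≤ 4) :
    bernoulliMgfGapDeriv2 t p ≤ 0 := by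
  have hp' : 0 ≤ 2*p - 1 := by linarith
  exact mul_nonpos_of_nonneg_of_nonpos (by positivity) (by linarith)

/-- For fixed `0 ≤ t < 4`, the function
`p ↦ exp(pt + p(1-p)t²/2) - ((1-p) + p e^t)` is concave on `[1/2,1]`;
equivalently, its second derivative in `p`, which equals
`(1/4) exp(pt(2+t-pt)/2)(2p-1)t³((2p-1)t-4)`, is non-positive on `[1/2,1]`. -/
theorem concave_diff (t : ℝ) (ht0 : 0 ≤ t) (ht4 : t < 4) :
    ConcaveOn ℝ (Set.Icc (1/2 : ℝ) 1)
      (fun p : ℝ => Real.exp (p*t + p*(1 - p)*t^2/2) - ((1 - p) + p * Real.exp t))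
    ∧ ∀ p ∈ Set.Icc (1/2 : ℝ) 1,
        deriv (deriv (fun p : ℝ =>
            Real.exp (p*t + p*(1 - p)*t^2/2) - ((1 - p) + p * Real.exp t))) p
          = (1/4) * Real.exp (p*t*(2 + t - p*t)/2) * (2*p - 1) * t^3 * ((2*p - 1)*t - 4)
    ∧ (1/4) * Real.exp (p*t*(2 + t - p*t)/2) * (2*p - 1) * t^3 * ((2*p - 1)*t - 4) ≤ 0 := by
  have hnonpos : ∀ p ∈ Icc (1/2 : ℝ) 1, bernoulliMgfGapDeriv2 t p ≤ 0 := fun p hp =>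
    bernoulliMgfGapDeriv2_nonpos ht0 hp.1 (by nlinarith [hp.1, hp.2])
  refine ⟨?_, fun p hp => ⟨deriv_deriv_bernoulliMgfGap t p, hnonpos p hp⟩⟩
  exact concaveOn_of_hasDerivWithinAt2_nonpos (convex_Icc _ _)
    (fun p _ => (hasDerivAt_bernoulliMgfGap t p).continuousAt.continuousWithinAt)
    (fun p _ => (hasDerivAt_bernoulliMgfGap t p).hasDerivWithinAt)
    (fun p _ => (hasDerivAt_bernoulliMgfGapDeriv t p).hasDerivWithinAt)
    (fun p hp => hnonpos p (interior_subset hp))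
end

section
/- Let n ≥ 1 be an integer, λ ≥ 0 a real number, p ∈ [0,1], set q = (1−p)ⁿ, and let C₀ = inf_{0<x<1/2} 2/(x·(1−x)·log(1/x)). Then q·exp(λ·(p·q − p)) + (1−q)·exp(λ·p·q) ≤ exp( p·λ²/(C₀·n) ). -/
/-!
Put `q = (1 - p)ⁿ` and `t = λp`. The left side is `exp f(t)` with
`f(s) = log (q + (1 - q) eˢ) - (1 - q) s`, the cumulant generating function of `q - X` for `X`
Bernoulli with mean `q`. Here `f(0) = f'(0) = 0` and `f''(s) = u(1 - u)` with
`u = q / (q + (1 - q) eˢ) ∈ [0, q]` for `s ≥ 0`, so `f(t) ≤ c t² / 2` as soon as `u(1 - u) ≤ c` on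
`[0, q]`. Take `c = q(1 - q)` if `q < 1/2` and `c = 1/4` otherwise. Since `np ≤ log (1/q)`,
evaluating the infimum defining `C₀` at `x = q`, resp. `x = 1/4`, gives `c C₀ n p ≤ 2`, which is
exactly what is needed.
-/

open Real Set

section SecondOrderBound

variable {f f' f'' : ℝ → ℝ} {c t : ℝ}

lemma le_apply_zero_of_hasDerivAt_nonpos {g g' : ℝ → ℝ}
    (hg : ∀ s, 0 ≤ s → HasDerivAt g (g' s) s) (hg' : ∀ s, 0 ≤ s → g' s ≤ 0) (ht : 0 ≤ t) :
    g t ≤ g 0 :=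
  antitoneOn_of_hasDerivWithinAt_nonpos (convex_Ici 0)
    (fun s hs => (hg s hs).continuousAt.continuousWithinAt)
    (fun s hs => (hg s (interior_subset hs)).hasDerivWithinAt)
    (fun s hs => hg' s (interior_subset hs)) self_mem_Ici ht ht

lemma le_mul_sq_div_two_of_hasDerivAt_of_le (hf : ∀ s, 0 ≤ s → HasDerivAt f (f' s) s)
    (hf' : ∀ s, 0 ≤ s → HasDerivAt f' (f'' s) s) (hf0 : f 0 = 0) (hf'0 : f' 0 = 0)
    (hc : ∀ s, 0 ≤ s → f'' s ≤ c) (ht : 0 ≤ t) :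
    f t ≤ c * t ^ 2 / 2 := by
  have hslope : ∀ s, 0 ≤ s → f' s - c * s ≤ 0 := fun s hs => by
    simpa [hf'0] using le_apply_zero_of_hasDerivAt_nonpos (g := fun s => f' s - c * s)
      (fun s hs => ((hf' s hs).sub ((hasDerivAt_id s).const_mul c)).congr_deriv (by simp))
      (fun s hs => sub_nonpos.2 (hc s hs)) hs
  have := le_apply_zero_of_hasDerivAt_nonpos (g := fun s => f s - c * s ^ 2 / 2)
    (fun s hs => ((hf s hs).sub (((hasDerivAt_pow 2 s).const_mul c).div_const 2)).congr_deriv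
      (by ring)) hslope ht
  simp only [hf0] at this
  linarith

end SecondOrderBound

theorem centered_bernoulli_mgf_le {q c t : ℝ} (hq0 : 0 ≤ q) (hq1 : q ≤ 1)
    (hc : ∀ u, 0 ≤ u → u ≤ q → u * (1 - u) ≤ c) (ht : 0 ≤ t) :
    q * exp (t * (q - 1)) + (1 - q) * exp (t * q) ≤ exp (c * t ^ 2 / 2) := by
  set D : ℝ → ℝ := fun s => q + (1 - q) * exp s
  have hD : ∀ s, 0 ≤ s → 1 ≤ D s := fun s hs => by nlinarith [one_le_exp hs]
  have hD' : ∀ s, HasDerivAt D ((1 - q) * exp s) s := fun s =>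
    ((hasDerivAt_exp s).const_mul (1 - q)).const_add q
  have hf : ∀ s, 0 ≤ s →
      HasDerivAt (fun s => log (D s) - (1 - q) * s) (q - q / D s) s := fun s hs =>
    (((hD' s).log (by linarith [hD s hs])).sub ((hasDerivAt_id s).const_mul (1 - q))).congr_deriv
      (by have := hD s hs; field_simp; simp [D]; ring)
  have hf' : ∀ s, 0 ≤ s →
      HasDerivAt (fun s => q - q / D s) (q / D s * (1 - q / D s)) s := fun s hs =>
    ((hasDerivAt_const s q).sub ((hasDerivAt_const s q).div (hD' s)
      (by linarith [hD s hs]))).congr_deriv (by have := hD s hs; field_simp; simp [D]; ring)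
  have hcgf : log (D t) - (1 - q) * t ≤ c * t ^ 2 / 2 :=
    le_mul_sq_div_two_of_hasDerivAt_of_le hf hf' (by simp [D]) (by simp [D])
      (fun s hs => hc _ (by have := hD s hs; positivity) (div_le_self hq0 (hD s hs))) ht
  have hmgf : q * exp (t * (q - 1)) + (1 - q) * exp (t * q) = exp (log (D t) - (1 - q) * t) := by
    rw [exp_sub, exp_log (by linarith [hD t ht]), show t * (q - 1) = -((1 - q) * t) by ring,
      show t * q = t - (1 - q) * t by ring, exp_neg, exp_sub]
    field_simp
    rfl
  rw [hmgf]
  exact exp_le_exp.2 hcgf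

noncomputable def constC₀ : ℝ :=
  sInf ((fun x : ℝ => 2 / (x * (1 - x) * log (1 / x))) '' Ioo 0 (1 / 2))

lemma mul_one_sub_mul_log_one_div_pos {x : ℝ} (hx : x ∈ Ioo (0 : ℝ) 1) :
    0 < x * (1 - x) * log (1 / x) :=
  mul_pos (mul_pos hx.1 (sub_pos.2 hx.2)) (log_pos (by rw [lt_div_iff₀ hx.1]; linarith [hx.2]))

lemma mul_one_sub_mul_log_one_div_le_one {x : ℝ} (hx0 : 0 < x) (hx1 : x ≤ 1) :
    x * (1 - x) * log (1 / x) ≤ 1 :=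
  calc x * (1 - x) * log (1 / x) ≤ x * (1 - x) * (1 / x - 1) := by
        gcongr
        exact log_le_sub_one_of_pos (by positivity)
    _ = (1 - x) ^ 2 := by field_simp
    _ ≤ 1 := by nlinarith

lemma two_le_two_div_mul_one_sub_mul_log {x : ℝ} (hx : x ∈ Ioo (0 : ℝ) 1) :
    2 ≤ 2 / (x * (1 - x) * log (1 / x)) := by
  rw [le_div_iff₀ (mul_one_sub_mul_log_one_div_pos hx)]
  linarith [mul_one_sub_mul_log_one_div_le_one hx.1 hx.2.le]

lemma two_mem_lowerBounds_image_two_div_mul_log :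
    2 ∈ lowerBounds ((fun x : ℝ => 2 / (x * (1 - x) * log (1 / x))) '' Ioo 0 (1 / 2)) := by
  rintro _ ⟨x, hx, rfl⟩
  exact two_le_two_div_mul_one_sub_mul_log ⟨hx.1, hx.2.trans (by norm_num)⟩

lemma two_le_constC₀ : 2 ≤ constC₀ :=
  le_csInf ⟨_, mem_image_of_mem _ (show (1 / 4 : ℝ) ∈ Ioo 0 (1 / 2) by norm_num)⟩
    two_mem_lowerBounds_image_two_div_mul_log

lemma constC₀_mul_le_two {x : ℝ} (hx : x ∈ Ioo (0 : ℝ) (1 / 2)) :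
    constC₀ * (x * (1 - x) * log (1 / x)) ≤ 2 := by
  rw [← le_div_iff₀ (mul_one_sub_mul_log_one_div_pos ⟨hx.1, hx.2.trans (by norm_num)⟩)]
  exact csInf_le ⟨2, two_mem_lowerBounds_image_two_div_mul_log⟩ (mem_image_of_mem _ hx)

lemma constC₀_mul_log_two_le : constC₀ * log 2 ≤ 16 / 3 := by
  have h := constC₀_mul_le_two (x := 1 / 4) (by norm_num)
  have hlog : log (1 / (1 / 4 : ℝ)) = 2 * log 2 := by
    rw [one_div_one_div, show (4 : ℝ) = 2 ^ 2 by norm_num, log_pow]; norm_num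
  rw [hlog] at h
  linarith

lemma natCast_mul_le_log_one_div_one_sub_pow (n : ℕ) {p : ℝ} (hp : p < 1) :
    n * p ≤ log (1 / (1 - p) ^ n) := by
  rw [one_div, log_inv, log_pow, ← mul_neg]
  gcongr
  linarith [log_le_sub_one_of_pos (sub_pos.2 hp)]

lemma exists_variance_bound_of_one_sub_pow {n : ℕ} (hn : 1 ≤ n) {p : ℝ} (hp0 : 0 ≤ p)
    (hp1 : p ≤ 1) :
    ∃ c, (∀ u, 0 ≤ u → u ≤ (1 - p) ^ n → u * (1 - u) ≤ c) ∧ constC₀ * (n * p) * c ≤ 2 := by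
  rcases hp1.eq_or_lt with rfl | hp1
  · refine ⟨0, fun u hu0 hu => ?_, by simp⟩
    rw [sub_self, zero_pow (by omega)] at hu
    simp [le_antisymm hu hu0]
  set q := (1 - p) ^ n
  have hq0 : 0 < q := pow_pos (by linarith) n
  have hlog : n * p ≤ log (1 / q) := natCast_mul_le_log_one_div_one_sub_pow n hp1
  have hC : 0 ≤ constC₀ := by linarith [two_le_constC₀]
  by_cases hq : q < 1 / 2
  · refine ⟨q * (1 - q), fun u hu0 huq => by nlinarith, ?_⟩
    calc constC₀ * (n * p) * (q * (1 - q)) ≤ constC₀ * log (1 / q) * (q * (1 - q)) := by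
          gcongr; nlinarith
      _ = constC₀ * (q * (1 - q) * log (1 / q)) := by ring
      _ ≤ 2 := constC₀_mul_le_two ⟨hq0, hq⟩
  · refine ⟨1 / 4, fun u _ _ => by nlinarith [sq_nonneg (1 - 2 * u)], ?_⟩
    have hlog2 : log (1 / q) ≤ log 2 :=
      log_le_log (by positivity) (by rw [div_le_iff₀ hq0]; linarith)
    calc constC₀ * (n * p) * (1 / 4) ≤ constC₀ * log 2 * (1 / 4) := by
          gcongr; linarith
      _ ≤ 16 / 3 * (1 / 4) := by gcongr; exact constC₀_mul_log_two_le
      _ ≤ 2 := by norm_num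

/-- Lemma (b): for `n ≥ 1`, `λ ≥ 0`, `p ∈ [0,1]`, `q = (1-p)ⁿ`, and
`C₀ = inf_{0<x<1/2} 2/(x(1-x) log(1/x))`,
`q e^{λ(pq - p)} + (1-q) e^{λpq} ≤ exp(pλ²/(C₀ n))`. -/
theorem lamp_b (n : ℕ) (hn : 1 ≤ n) (lam p : ℝ) (hlam : 0 ≤ lam)
    (hp0 : 0 ≤ p) (hp1 : p ≤ 1) (C₀ : ℝ)
    (hC₀ : C₀ = sInf ((fun x : ℝ => 2 / (x * (1 - x) * Real.log (1/x))) ''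
      Set.Ioo (0:ℝ) (1/2))) :
    (1 - p)^n * Real.exp (lam * (p * (1 - p)^n - p))
      + (1 - (1 - p)^n) * Real.exp (lam * p * (1 - p)^n)
    ≤ Real.exp (p * lam^2 / (C₀ * n)) := by
  obtain rfl : C₀ = constC₀ := hC₀
  obtain ⟨c, hc, hcC⟩ := exists_variance_bound_of_one_sub_pow hn hp0 hp1
  have hCn : 0 < constC₀ * n := by
    have := two_le_constC₀
    have : (0 : ℝ) < n := by exact_mod_cast hn
    positivity
  calc (1 - p) ^ n * exp (lam * (p * (1 - p) ^ n - p))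
        + (1 - (1 - p) ^ n) * exp (lam * p * (1 - p) ^ n)
      = (1 - p) ^ n * exp (lam * p * ((1 - p) ^ n - 1))
        + (1 - (1 - p) ^ n) * exp (lam * p * (1 - p) ^ n) := by ring_nf
    _ ≤ exp (c * (lam * p) ^ 2 / 2) :=
      centered_bernoulli_mgf_le (pow_nonneg (by linarith) n)
        (pow_le_one₀ (by linarith) (by linarith)) hc (mul_nonneg hlam hp0)
    _ ≤ exp (p * lam ^ 2 / (constC₀ * n)) := by
      rw [exp_le_exp, div_le_div_iff₀ two_pos hCn]
      calc c * (lam * p) ^ 2 * (constC₀ * n) = lam ^ 2 * p * (constC₀ * (n * p) * c) := by ring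
        _ ≤ lam ^ 2 * p * 2 := by gcongr
        _ = p * lam ^ 2 * 2 := by ring
end

section
/- For all p, q ∈ (0,1) with q ≠ 1/2, one has (1−2q)·p / log((1−q)/q) ≤ log(1−p)/log(q). -/
/-!
Since `log (1 - p) ≤ -p`, the right-hand side is at least `p / (-log q)`, so it suffices that
`(1 - 2q) / log ((1 - q) / q) ≤ 1 / (-log q)`. Clearing denominators, this says
`2 q log q ≤ log (1 - q)` for `q ≤ 1/2` and the reverse for `q ≥ 1/2`: a sign pattern of the
concave function `log (1 - x) - 2 x log x` on `[0, 1)`, which vanishes at `x = 0` and `x = 1/2`.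
-/

open Real Set

theorem concaveOn_log_one_sub : ConcaveOn ℝ (Iio 1) fun x : ℝ => log (1 - x) := by
  have h := strictConcaveOn_log_Ioi.concaveOn.comp_affineMap (AffineMap.lineMap (1 : ℝ) 0)
  have e : ⇑(AffineMap.lineMap (1 : ℝ) (0 : ℝ)) = fun x => 1 - x := by
    ext x; simp [AffineMap.lineMap_apply_ring', neg_add_eq_sub]
  rwa [e, preimage_const_sub_Ioi, sub_zero] at h

theorem concaveOn_log_one_sub_add_two_negMulLog :
    ConcaveOn ℝ (Ico 0 1) fun x : ℝ => log (1 - x) + 2 * negMulLog x :=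
  (concaveOn_log_one_sub.subset (fun _ hx => hx.2) (convex_Ico 0 1)).add
    ((concaveOn_negMulLog.smul zero_le_two).subset (fun _ hx => hx.1) (convex_Ico 0 1))

theorem log_one_sub_add_two_negMulLog_half :
    log (1 - 1 / 2 : ℝ) + 2 * negMulLog (1 / 2) = 0 := by
  rw [negMulLog]; ring_nf

theorem two_mul_mul_log_le_log_one_sub {q : ℝ} (hq0 : 0 ≤ q) (hq : q ≤ 1 / 2) :
    2 * q * log q ≤ log (1 - q) := by
  have := concaveOn_log_one_sub_add_two_negMulLog.ge_on_segment (x := 0) (y := 1 / 2)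
    (by norm_num) (by norm_num) (by rw [segment_eq_Icc (by norm_num)]; exact ⟨hq0, hq⟩)
  rw [log_one_sub_add_two_negMulLog_half] at this
  simp only [sub_zero, log_one, negMulLog_zero, mul_zero, add_zero, min_self] at this
  rw [negMulLog] at this
  linarith

theorem log_one_sub_le_two_mul_mul_log {q : ℝ} (hq : 1 / 2 ≤ q) (hq1 : q < 1) :
    log (1 - q) ≤ 2 * q * log q := by
  have := concaveOn_log_one_sub_add_two_negMulLog.right_le_of_le_left'' (x := 0) (y := 1 / 2)
    (by norm_num) ⟨by linarith, hq1⟩ (by norm_num) hq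
    (by rw [log_one_sub_add_two_negMulLog_half]; simp)
  rw [log_one_sub_add_two_negMulLog_half, negMulLog] at this
  linarith

theorem one_sub_two_mul_div_log_le_inv_neg_log {q : ℝ} (hq0 : 0 < q) (hq1 : q < 1) :
    (1 - 2 * q) / log ((1 - q) / q) ≤ (-log q)⁻¹ := by
  have hm : 0 < -log q := neg_pos.2 (log_neg hq0 hq1)
  have hL : log ((1 - q) / q) = log (1 - q) - log q := log_div (by linarith) hq0.ne'
  rcases lt_trichotomy q (1 / 2) with hlt | rfl | hgt
  · have hpos : 0 < log ((1 - q) / q) := log_pos ((one_lt_div hq0).2 (by linarith))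
    rw [div_le_iff₀ hpos, ← div_eq_inv_mul, le_div_iff₀ hm, hL]
    linarith [two_mul_mul_log_le_log_one_sub hq0.le hlt.le]
  · rw [show (1 : ℝ) - 2 * (1 / 2) = 0 by norm_num, zero_div]
    exact inv_nonneg.2 hm.le
  · have hneg : log ((1 - q) / q) < 0 :=
      log_neg (div_pos (by linarith) hq0) ((div_lt_one hq0).2 (by linarith))
    rw [div_le_iff_of_neg hneg, ← div_eq_inv_mul, div_le_iff₀ hm, hL]
    linarith [log_one_sub_le_two_mul_mul_log hgt.le hq1]

theorem lamp_key_ineq_general (p q : ℝ) (hp0 : 0 < p) (hp1 : p < 1)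
    (hq0 : 0 < q) (hq1 : q < 1) :
    (1 - 2*q) * p / Real.log ((1 - q) / q) ≤ Real.log (1 - p) / Real.log q := by
  have hp : p ≤ -log (1 - p) := by linarith [log_le_sub_one_of_pos (sub_pos.2 hp1)]
  have hm : 0 < -log q := neg_pos.2 (log_neg hq0 hq1)
  calc (1 - 2 * q) * p / log ((1 - q) / q) = p * ((1 - 2 * q) / log ((1 - q) / q)) := by ring
    _ ≤ p * (-log q)⁻¹ := by gcongr; exact one_sub_two_mul_div_log_le_inv_neg_log hq0 hq1
    _ ≤ -log (1 - p) * (-log q)⁻¹ := mul_le_mul_of_nonneg_right hp (inv_nonneg.2 hm.le)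
    _ = log (1 - p) / log q := by rw [← div_eq_mul_inv, neg_div_neg_eq]

/-- For `p, q ∈ (0,1)` with `q ≠ 1/2`,
`(1-2q)p / log((1-q)/q) ≤ log(1-p)/log(q)`. -/
theorem lamp_key_ineq (p q : ℝ) (hp0 : 0 < p) (hp1 : p < 1)
    (hq0 : 0 < q) (hq1 : q < 1) (hq : q ≠ 1/2) :
    (1 - 2*q) * p / Real.log ((1 - q) / q) ≤ Real.log (1 - p) / Real.log q :=
  lamp_key_ineq_general p q hp0 hp1 hq0 hq1
end

section
/- For every q ∈ (1/2,1), one has 4·log(q/(1−q)) / ( (2q−1)·log(1/q) ) ≥ 8/log(2), and 8/log(2) > inf_{0<x<1/2} 2/(x·(1−x)·log(1/x)). -/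
/-- For `q ∈ (1/2,1)`, `4 log(q/(1-q)) / ((2q-1) log(1/q)) ≥ 8/log 2`,
and `8/log 2 > C₀ = inf_{0<x<1/2} 2/(x(1-x) log(1/x))`. -/
theorem log_odds_lower_bound :
    (∀ q ∈ Set.Ioo (1/2 : ℝ) 1,
      4 * Real.log (q / (1 - q)) / ((2*q - 1) * Real.log (1/q)) ≥ 8 / Real.log 2)
    ∧ 8 / Real.log 2 >
        sInf ((fun x : ℝ => 2 / (x * (1 - x) * Real.log (1/x))) '' Set.Ioo (0:ℝ) (1/2)) := by
  have L2 : (0:ℝ) < Real.log 2 := Real.log_pos (by norm_num)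
  constructor
  · rintro q ⟨hq1, hq2⟩
    have hq0 : 0 < q := by linarith
    have h1q : 0 < 1 - q := by linarith
    have ht : 0 < 2*q - 1 := by linarith
    have hlogq_neg : Real.log q < 0 := Real.log_neg hq0 hq2
    have hinv : Real.log (1/q) = - Real.log q := by
      rw [one_div, Real.log_inv]
    have hden : 0 < (2*q - 1) * Real.log (1/q) := by
      apply mul_pos ht
      rw [hinv]; linarith
    rw [ge_iff_le, div_le_div_iff₀ L2 hden]
    have hldiv : Real.log (q / (1-q)) = Real.log q - Real.log (1-q) :=
      Real.log_div (ne_of_gt hq0) (ne_of_gt h1q)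
    rw [hldiv, hinv]
    set u := Real.log q with hu
    set v := Real.log (1-q) with hv
    -- fact A : log(2-2q) ≤ 1-2q, i.e. log 2 + v ≤ 1-2q
    have hA : Real.log 2 + v ≤ 1 - 2*q := by
      have := Real.log_le_sub_one_of_pos (show (0:ℝ) < 2-2*q by linarith)
      have h2 : Real.log (2-2*q) = Real.log 2 + v := by
        rw [hv, ← Real.log_mul (by norm_num) (ne_of_gt h1q)]
        ring_nf
      linarith [h2 ▸ this]
    -- fact B : log(1/(2q)) ≤ 1/(2q) - 1, i.e. 2q(log 2 + u) ≥ 2q - 1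
    have hB : 2*q - 1 ≤ 2*q*(Real.log 2 + u) := by
      have h0 : (0:ℝ) < 1/(2*q) := by positivity
      have := Real.log_le_sub_one_of_pos h0
      have h2 : Real.log (1/(2*q)) = -(Real.log 2 + u) := by
        rw [one_div, Real.log_inv, hu, ← Real.log_mul (by norm_num) (ne_of_gt hq0)]
      rw [h2] at this
      -- this : -(log 2 + u) ≤ 1/(2q) - 1 ; multiply by 2q > 0
      have h3 := mul_le_mul_of_nonneg_left this (by linarith : (0:ℝ) ≤ 2*q)
      have h4 : 2*q * (1/(2*q) - 1) = 1 - 2*q := by field_simp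
      nlinarith
    -- fact C : concavity chord: u ≥ -2(1-q) log 2
    have hC : -(2*(1-q)) * Real.log 2 ≤ u := by
      have hcc : ConcaveOn ℝ (Set.Ioi (0:ℝ)) Real.log :=
        strictConcaveOn_log_Ioi.concaveOn
      have := hcc.2 (Set.mem_Ioi.2 (show (0:ℝ) < 1/2 by norm_num))
        (Set.mem_Ioi.2 (show (0:ℝ) < 1 by norm_num))
        (show (0:ℝ) ≤ 2*(1-q) by linarith) (show (0:ℝ) ≤ 2*q-1 by linarith)
        (by ring)
      simp only [smul_eq_mul, Real.log_one, mul_zero, add_zero] at this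
      have harg : (2*(1-q)) * (1/2 : ℝ) + (2*q-1) * 1 = q := by ring
      rw [harg] at this
      have hl2 : Real.log (1/2 : ℝ) = - Real.log 2 := by
        rw [one_div, Real.log_inv]
      rw [hl2] at this
      rw [hu]; linarith
    nlinarith [mul_le_mul_of_nonneg_left hC (le_of_lt ht),
      mul_pos ht (sub_pos.2 hq2), sq_nonneg (2*q-1), mul_pos L2 ht,
      mul_le_mul_of_nonneg_left hA L2.le]
  · set S := ((fun x : ℝ => 2 / (x * (1 - x) * Real.log (1/x))) '' Set.Ioo (0:ℝ) (1/2))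
    have hbdd : BddBelow S := by
      refine ⟨0, ?_⟩
      rintro y ⟨x, ⟨hx0, hx2⟩, rfl⟩
      have hl : 0 < Real.log (1/x) := Real.log_pos (by rw [lt_div_iff₀ hx0]; linarith)
      have : 0 < x * (1-x) * Real.log (1/x) := by
        apply mul_pos (mul_pos hx0 (by linarith)) hl
      positivity
    have hmem : (2:ℝ) / ((1/4) * (1 - 1/4) * Real.log (1/(1/4))) ∈ S :=
      ⟨1/4, by norm_num, rfl⟩
    have hle := csInf_le hbdd hmem
    have hval : (2:ℝ) / ((1/4) * (1 - 1/4) * Real.log (1/(1/4:ℝ))) = 16 / (3 * Real.log 2) := by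
      have h4 : Real.log (1/(1/4:ℝ)) = 2 * Real.log 2 := by
        norm_num
        rw [show (4:ℝ) = 2^2 by norm_num, Real.log_pow]
        push_cast; ring
      rw [h4]; field_simp; ring
    rw [hval] at hle
    have : (16:ℝ) / (3 * Real.log 2) < 8 / Real.log 2 := by
      rw [div_lt_div_iff₀ (by positivity) L2]
      nlinarith
    linarith
end

section
/- (Missing mass, lower tail) Let (p_j)_{j∈ℕ} be nonnegative reals with ∑_j p_j = 1, let n ≥ 1, and let X₁,…,Xₙ be i.i.d. ℕ-valued random variables with P(X_i = j) = p_j. Define the missing mass U_n = ∑_{j∈ℕ} p_j·1{ j ∉ {X₁,…,Xₙ} }, and let C₀ = inf_{0<x<1/2} 2/(x·(1−x)·log(1/x)). Then for every ε > 0, P( U_n < E[U_n] − ε ) ≤ exp(−C₀·n·ε²/4). -/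
/-!
Chernoff's method. Write `U = ∑ⱼ pⱼ Zⱼ` with `Zⱼ` the indicator that `j` is never drawn. As
`Zⱼ ∈ {0, 1}`, `e^{-L U} ≤ ∏_{j ∈ S} (1 - aⱼ Zⱼ)` with `aⱼ = 1 - e^{-L pⱼ}`, and the indicators
are negatively dependent: `E ∏ (1 - aⱼ Zⱼ) ≤ ∏ (1 - aⱼ qⱼ)` with `qⱼ = (1 - pⱼ)ⁿ = E Zⱼ`
(induction on the number of draws, conditioning on the last one). Each factor is the Laplace
transform of a Bernoulli(`qⱼ`) variable, bounded by `exp (-qⱼ t + c t² / 2)` where `c` dominates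
the variances `u (1 - u)`, `u ∈ [0, qⱼ]`; since `qⱼ ≤ e^{-n pⱼ}`, the definition of `C₀` is exactly
what allows `c pⱼ ≤ 2 / (C₀ n)`. Hence `E e^{-L U} ≤ exp (-L E U + L² / (C₀ n))`, and Markov's
inequality with `L = C₀ n ε / 2` gives the bound.
-/

open MeasureTheory ProbabilityTheory

open Real Set

lemma nonneg_of_hasDerivAt_nonneg {f f' : ℝ → ℝ} (hf : ∀ x, HasDerivAt f (f' x) x)
    (hf' : ∀ x, 0 ≤ x → 0 ≤ f' x) (h0 : f 0 = 0) {t : ℝ} (ht : 0 ≤ t) : 0 ≤ f t := by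
  have hmono : MonotoneOn f (Ici 0) :=
    monotoneOn_of_deriv_nonneg (convex_Ici 0)
      (fun x _ => (hf x).continuousAt.continuousWithinAt)
      (fun x _ => (hf x).differentiableAt.differentiableWithinAt)
      (fun x hx => (hf x).deriv ▸ hf' x (interior_subset hx))
  simpa [h0] using hmono self_mem_Ici ht ht

/-- The logarithm of the left-hand side has second derivative `u (1 - u)` with `u ∈ [0, q]`. -/
lemma one_sub_add_mul_exp_neg_le {q c t : ℝ} (hq0 : 0 ≤ q) (hq1 : q ≤ 1)
    (hc : ∀ u ∈ Icc 0 q, u * (1 - u) ≤ c) (ht : 0 ≤ t) :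
    1 - q + q * exp (-t) ≤ exp (-(q * t) + c * t ^ 2 / 2) := by
  set D : ℝ → ℝ := fun s => 1 - q + q * exp (-s)
  set u : ℝ → ℝ := fun s => q * exp (-s) / D s
  have hD_pos : ∀ s, 0 < D s := fun s => by
    rcases hq0.eq_or_lt with rfl | hq
    · simp [D]
    · have : 0 < q * exp (-s) := by positivity
      simp only [D]
      linarith
  have hexp : ∀ s, HasDerivAt (fun s => exp (-s)) (-exp (-s)) s := fun s => by
    simpa using (hasDerivAt_neg s).exp
  have hD : ∀ s, HasDerivAt D (-(q * exp (-s))) s := fun s =>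
    (((hexp s).const_mul q).const_add (1 - q)).congr_deriv (by ring)
  have hu : ∀ s, HasDerivAt u (-(u s * (1 - u s))) s := fun s => by
    refine (((hexp s).const_mul q).div (hD s) (hD_pos s).ne').congr_deriv ?_
    have := (hD_pos s).ne'
    simp only [u, D] at this ⊢
    field_simp
    ring
  have hu_mem : ∀ s, 0 ≤ s → u s ∈ Icc 0 q := fun s hs => by
    have hE : exp (-s) ≤ 1 := exp_le_one_iff.mpr (by linarith)
    refine ⟨by positivity, ?_⟩
    rw [div_le_iff₀ (hD_pos s)]
    nlinarith [mul_nonneg hq0 (mul_nonneg (sub_nonneg.2 hq1) (sub_nonneg.2 hE))]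
  have hslope : ∀ s, 0 ≤ s → 0 ≤ -q + c * s + u s := by
    refine fun s hs => nonneg_of_hasDerivAt_nonneg (f := fun s => -q + c * s + u s)
      (f' := fun s => c - u s * (1 - u s))
      (fun x => ?_) (fun x hx => sub_nonneg.2 (hc _ (hu_mem x hx))) (by simp [u, D]) hs
    exact ((((hasDerivAt_id x).const_mul c).const_add (-q)).add (hu x)).congr_deriv (by ring)
  have hlog : 0 ≤ -(q * t) + c * t ^ 2 / 2 - log (D t) := by
    refine nonneg_of_hasDerivAt_nonneg (f := fun s => -(q * s) + c * s ^ 2 / 2 - log (D s))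
      (f' := fun s => -q + c * s + u s) (fun x => ?_) hslope (by simp [D]) ht
    refine ((((hasDerivAt_id x).const_mul q).neg.add
      (((hasDerivAt_pow 2 x).const_mul c).div_const 2)).sub
        ((hD x).log (hD_pos x).ne')).congr_deriv ?_
    simp only [u]
    push_cast
    ring
  show D t ≤ _
  rw [← exp_log (hD_pos t)]
  exact exp_le_exp.2 (by linarith)

/-- For `q < 1 / 2` take `c = q (1 - q)` and use `s ≤ log (1 / q)`; otherwise `c = 1 / 4` and
`s ≤ log 2`. -/
lemma exists_variance_proxy {C q s : ℝ} (hC : 0 ≤ C)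
    (hCy : ∀ y ∈ Ioo (0 : ℝ) (1 / 2), C * (y * (1 - y) * log (1 / y)) ≤ 2)
    (hq0 : 0 ≤ q) (hqs : q ≤ exp (-s)) :
    ∃ c, (∀ u ∈ Icc 0 q, u * (1 - u) ≤ c) ∧ C * c * s ≤ 2 := by
  rcases hq0.eq_or_lt with rfl | hq
  · refine ⟨0, fun u hu => ?_, by simp⟩
    obtain rfl : u = 0 := le_antisymm hu.2 hu.1
    simp
  have hs_log : s ≤ log (1 / q) := by
    rw [one_div, log_inv, le_neg]
    simpa using log_le_log hq hqs
  by_cases hhalf : q < 1 / 2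
  · refine ⟨q * (1 - q), fun u hu => by nlinarith [hu.1, hu.2], ?_⟩
    have hvar : 0 ≤ C * (q * (1 - q)) := mul_nonneg hC (by nlinarith)
    calc C * (q * (1 - q)) * s ≤ C * (q * (1 - q)) * log (1 / q) :=
          mul_le_mul_of_nonneg_left hs_log hvar
      _ = C * (q * (1 - q) * log (1 / q)) := by ring
      _ ≤ 2 := hCy q ⟨hq, hhalf⟩
  · refine ⟨1 / 4, fun u _ => by nlinarith [sq_nonneg (1 - 2 * u)], ?_⟩
    have hs2 : s ≤ log 2 := by
      refine hs_log.trans (log_le_log (by positivity) ?_)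
      rw [div_le_iff₀ hq]
      linarith
    have hC4 := hCy (1 / 4) (by norm_num)
    rw [show (1 : ℝ) / (1 / 4) = 2 ^ 2 by norm_num, log_pow] at hC4
    nlinarith [log_pos (one_lt_two : (1 : ℝ) < 2)]

lemma mul_one_sub_mul_log_one_div_mem_Ioc {y : ℝ} (hy : y ∈ Ioo (0 : ℝ) (1 / 2)) :
    y * (1 - y) * log (1 / y) ∈ Ioc 0 1 := by
  obtain ⟨hy0, hy2⟩ := hy
  have hlog_pos : 0 < log (1 / y) := log_pos (by rw [lt_div_iff₀ hy0]; linarith)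
  have hlog_le : log (1 / y) ≤ 1 / y - 1 := log_le_sub_one_of_pos (by positivity)
  have h1y : 0 < 1 - y := by linarith
  refine ⟨by positivity, ?_⟩
  calc y * (1 - y) * log (1 / y) ≤ y * (1 - y) * (1 / y - 1) :=
        mul_le_mul_of_nonneg_left hlog_le (by nlinarith)
    _ = (1 - y) ^ 2 := by field_simp
    _ ≤ 1 := by nlinarith

lemma two_le_sInf_image :
    2 ≤ sInf ((fun x : ℝ => 2 / (x * (1 - x) * log (1 / x))) '' Ioo (0 : ℝ) (1 / 2)) := by
  refine le_csInf ((nonempty_Ioo.2 (by norm_num)).image _) ?_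
  rintro _ ⟨y, hy, rfl⟩
  obtain ⟨hpos, hle⟩ := mul_one_sub_mul_log_one_div_mem_Ioc hy
  rw [le_div_iff₀ hpos]
  linarith

lemma sInf_image_mul_le_two {y : ℝ} (hy : y ∈ Ioo (0 : ℝ) (1 / 2)) :
    sInf ((fun x : ℝ => 2 / (x * (1 - x) * log (1 / x))) '' Ioo (0 : ℝ) (1 / 2))
      * (y * (1 - y) * log (1 / y)) ≤ 2 := by
  have hbdd : BddBelow ((fun x : ℝ => 2 / (x * (1 - x) * log (1 / x))) '' Ioo (0 : ℝ) (1 / 2)) :=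
    ⟨0, by
      rintro _ ⟨x, hx, rfl⟩
      exact (div_pos two_pos (mul_one_sub_mul_log_one_div_mem_Ioc hx).1).le⟩
  rw [← le_div_iff₀ (mul_one_sub_mul_log_one_div_mem_Ioc hy).1]
  exact csInf_le hbdd ⟨y, hy, rfl⟩

lemma one_sub_mul_pow_le_exp {C L x : ℝ} {n : ℕ} (hC : 0 < C) (hn : 0 < n)
    (hCy : ∀ y ∈ Ioo (0 : ℝ) (1 / 2), C * (y * (1 - y) * log (1 / y)) ≤ 2)
    (hx0 : 0 ≤ x) (hx1 : x ≤ 1) (hL : 0 ≤ L) :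
    1 - (1 - exp (-(L * x))) * (1 - x) ^ n
      ≤ exp (-(L * (x * (1 - x) ^ n)) + L ^ 2 * x / (C * n)) := by
  set q := (1 - x) ^ n
  have hq0 : 0 ≤ q := pow_nonneg (by linarith) n
  have hq_exp : q ≤ exp (-(n * x)) := by
    rw [neg_mul_eq_mul_neg, exp_nat_mul]
    exact pow_le_pow_left₀ (by linarith) (by linarith [add_one_le_exp (-x)]) n
  obtain ⟨c, hc, hcx⟩ := exists_variance_proxy hC.le hCy hq0 hq_exp
  have hCn : 0 < C * n := by positivity
  calc 1 - (1 - exp (-(L * x))) * q = 1 - q + q * exp (-(L * x)) := by ring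
    _ ≤ exp (-(q * (L * x)) + c * (L * x) ^ 2 / 2) :=
        one_sub_add_mul_exp_neg_le hq0 (hq_exp.trans (exp_le_one_iff.2 (by
          have : (0 : ℝ) ≤ n * x := by positivity
          linarith))) hc (by positivity)
    _ ≤ _ := by
        have hquad : c * (L * x) ^ 2 / 2 ≤ L ^ 2 * x / (C * n) := by
          rw [le_div_iff₀ hCn]
          nlinarith [mul_le_mul_of_nonneg_left hcx (mul_nonneg hx0 (sq_nonneg L))]
        gcongr exp ?_
        linarith

section Occupancy

open Finset

variable {α : Type*} [DecidableEq α]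

/-- Expanding the product and dropping the terms of order at least two in `d`. -/
lemma prod_add_sum_mul_prod_erase_le (S : Finset α) {b d : α → ℝ} (hb : ∀ j ∈ S, 0 ≤ b j)
    (hd : ∀ j ∈ S, 0 ≤ d j) :
    ∏ j ∈ S, b j + ∑ k ∈ S, d k * ∏ j ∈ S.erase k, b j ≤ ∏ j ∈ S, (b j + d j) := by
  induction S using Finset.induction_on with
  | empty => simp
  | insert m S hm ih =>
    have hbS : ∀ j ∈ S, 0 ≤ b j := fun j hj => hb j (mem_insert_of_mem hj)
    have hdS : ∀ j ∈ S, 0 ≤ d j := fun j hj => hd j (mem_insert_of_mem hj)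
    have hbm := hb m (mem_insert_self m S)
    have hdm := hd m (mem_insert_self m S)
    have herase : ∀ k ∈ S, (insert m S).erase k = insert m (S.erase k) := fun k hk =>
      erase_insert_of_ne (ne_of_mem_of_not_mem hk hm).symm
    rw [prod_insert hm, prod_insert hm, sum_insert hm, erase_insert hm,
      sum_congr rfl fun k hk => by rw [herase k hk, prod_insert fun h => hm (mem_of_mem_erase h)]]
    have hfactor : ∑ k ∈ S, d k * (b m * ∏ j ∈ S.erase k, b j)
        = b m * ∑ k ∈ S, d k * ∏ j ∈ S.erase k, b j := by
      rw [mul_sum]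
      exact sum_congr rfl fun k _ => by ring
    calc b m * ∏ j ∈ S, b j + (d m * ∏ j ∈ S, b j + ∑ k ∈ S, d k * (b m * ∏ j ∈ S.erase k, b j))
        = b m * (∏ j ∈ S, b j + ∑ k ∈ S, d k * ∏ j ∈ S.erase k, b j) + d m * ∏ j ∈ S, b j := by
          rw [hfactor]; ring
      _ ≤ b m * ∏ j ∈ S, (b j + d j) + d m * ∏ j ∈ S, (b j + d j) :=
          add_le_add (mul_le_mul_of_nonneg_left (ih hbS hdS) hbm)
            (mul_le_mul_of_nonneg_left
              (prod_le_prod hbS fun j hj => le_add_of_nonneg_right (hdS j hj)) hdm)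
      _ = (b m + d m) * ∏ j ∈ S, (b j + d j) := by ring

/-- `E ∏_{j ∈ S} (1 - a j Z j)`, where `Z j` indicates that none of `n` independent draws
from `p` equals `j`, written out by inclusion–exclusion. -/
def emptyProductMean (p a : α → ℝ) (n : ℕ) (S : Finset α) : ℝ :=
  ∑ T ∈ S.powerset, (∏ j ∈ T, -a j) * (1 - ∑ j ∈ T, p j) ^ n

variable {p a : α → ℝ}

lemma emptyProductMean_zero (S : Finset α) :
    emptyProductMean p a 0 S = ∏ j ∈ S, (1 - a j) := by
  simp [emptyProductMean, sub_eq_neg_add, prod_add]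

/-- Conditioning on the last draw: it misses `S`, or it hits `k ∈ S` and kills `Z k`. -/
lemma emptyProductMean_succ (n : ℕ) (S : Finset α) :
    emptyProductMean p a (n + 1) S = (1 - ∑ j ∈ S, p j) * emptyProductMean p a n S
      + ∑ k ∈ S, p k * emptyProductMean p a n (S.erase k) := by
  have hsplit : ∀ T ∈ S.powerset, (∏ j ∈ T, -a j) * (1 - ∑ j ∈ T, p j) ^ (n + 1)
      = (1 - ∑ j ∈ S, p j) * ((∏ j ∈ T, -a j) * (1 - ∑ j ∈ T, p j) ^ n)
        + ∑ k ∈ S \ T, p k * ((∏ j ∈ T, -a j) * (1 - ∑ j ∈ T, p j) ^ n) := by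
    intro T hT
    rw [← sum_mul, sum_sdiff_eq_sub (Finset.mem_powerset.1 hT)]
    ring
  rw [emptyProductMean, sum_congr rfl hsplit, sum_add_distrib, ← mul_sum]
  congr 1
  rw [sum_comm' (t' := S) (s' := fun k => (S.erase k).powerset) (by
    intro T k
    simp only [Finset.mem_powerset, Finset.mem_sdiff, subset_erase]
    tauto)]
  simp only [emptyProductMean, mul_sum]

/-- `E ∏ (1 - a j Z j) ≤ ∏ (1 - a j E Z j)`: the empty-bin indicators are negatively dependent. -/
lemma emptyProductMean_le_prod (n : ℕ) {S : Finset α} (hp : ∀ j ∈ S, 0 ≤ p j)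
    (hS : ∑ j ∈ S, p j ≤ 1) (ha0 : ∀ j ∈ S, 0 ≤ a j) (ha1 : ∀ j ∈ S, a j ≤ 1) :
    emptyProductMean p a n S ≤ ∏ j ∈ S, (1 - a j * (1 - p j) ^ n) := by
  induction n generalizing S with
  | zero => simp [emptyProductMean_zero]
  | succ n ih =>
    have hp1 : ∀ j ∈ S, p j ≤ 1 := fun j hj =>
      (single_le_sum hp hj).trans hS
    have hb : ∀ j ∈ S, 0 ≤ 1 - a j * (1 - p j) ^ n := fun j hj => by
      have := pow_le_one₀ (sub_nonneg.2 (hp1 j hj)) (by linarith [hp j hj]) (n := n)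
      nlinarith [ha0 j hj, ha1 j hj, pow_nonneg (sub_nonneg.2 (hp1 j hj)) n]
    have hd : ∀ j ∈ S, 0 ≤ p j * (a j * (1 - p j) ^ n) := fun j hj =>
      mul_nonneg (hp j hj) (mul_nonneg (ha0 j hj) (pow_nonneg (sub_nonneg.2 (hp1 j hj)) n))
    have herase : ∀ k ∈ S, emptyProductMean p a n (S.erase k)
        ≤ ∏ j ∈ S.erase k, (1 - a j * (1 - p j) ^ n) := fun k hk =>
      ih (fun j hj => hp j (mem_of_mem_erase hj))
        ((sum_le_sum_of_subset_of_nonneg (erase_subset k S) fun j hj _ => hp j hj).trans hS)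
        (fun j hj => ha0 j (mem_of_mem_erase hj)) (fun j hj => ha1 j (mem_of_mem_erase hj))
    calc emptyProductMean p a (n + 1) S
        ≤ (1 - ∑ j ∈ S, p j) * ∏ j ∈ S, (1 - a j * (1 - p j) ^ n)
          + ∑ k ∈ S, p k * ∏ j ∈ S.erase k, (1 - a j * (1 - p j) ^ n) := by
          rw [emptyProductMean_succ]
          exact add_le_add (mul_le_mul_of_nonneg_left (ih hp hS ha0 ha1) (by linarith))
            (sum_le_sum fun k hk => mul_le_mul_of_nonneg_left (herase k hk) (hp k hk))
      _ = ∏ j ∈ S, (1 - a j * (1 - p j) ^ n)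
          + ∑ k ∈ S, p k * (a k * (1 - p k) ^ n) * ∏ j ∈ S.erase k, (1 - a j * (1 - p j) ^ n) := by
          rw [sub_mul, one_mul, sum_mul, sub_add, ← sum_sub_distrib, sub_eq_add_neg,
            ← sum_neg_distrib]
          congr 1
          refine sum_congr rfl fun k hk => ?_
          rw [← mul_prod_erase S _ hk]
          ring
      _ ≤ ∏ j ∈ S, (1 - a j * (1 - p j) ^ n + p j * (a j * (1 - p j) ^ n)) :=
          prod_add_sum_mul_prod_erase_le S hb hd
      _ = ∏ j ∈ S, (1 - a j * (1 - p j) ^ (n + 1)) :=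
          prod_congr rfl fun j _ => by ring

end Occupancy

section MissingMass

variable {Ω ι : Type*}

lemma setOf_forall_notMem_eq_iInter (X : ι → Ω → ℕ) (T : Finset ℕ) :
    {ω | ∀ i, X i ω ∉ T} = ⋂ i, X i ⁻¹' (T : Set ℕ)ᶜ := by
  ext; simp

variable [Fintype ι]

def missingIndicator (X : ι → Ω → ℕ) (j : ℕ) (ω : Ω) : ℝ :=
  if ∀ i, X i ω ≠ j then 1 else 0

noncomputable def missingMass (p : ℕ → ℝ) (X : ι → Ω → ℕ) (ω : Ω) : ℝ :=
  ∑' j, p j * missingIndicator X j ω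

variable {X : ι → Ω → ℕ}

lemma missingIndicator_mem_Icc (j : ℕ) (ω : Ω) : missingIndicator X j ω ∈ Icc 0 1 := by
  unfold missingIndicator
  split_ifs <;> simp

lemma norm_missingIndicator_le_one (j : ℕ) (ω : Ω) : ‖missingIndicator X j ω‖ ≤ 1 := by
  rw [Real.norm_of_nonneg (missingIndicator_mem_Icc j ω).1]
  exact (missingIndicator_mem_Icc j ω).2

lemma prod_missingIndicator (T : Finset ℕ) (ω : Ω) :
    ∏ j ∈ T, missingIndicator X j ω = {ω | ∀ i, X i ω ∉ T}.indicator 1 ω := by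
  classical
  rw [indicator_apply]
  split_ifs with hω
  · exact Finset.prod_eq_one fun j hj => if_pos fun i (h : X i ω = j) => hω i (h ▸ hj)
  · simp only [mem_ofPred_eq, not_forall, not_not] at hω
    obtain ⟨i, hi⟩ := hω
    exact Finset.prod_eq_zero hi (if_neg fun h => h i rfl)

lemma summable_mul_missingIndicator (p : ℕ → ℝ) (hp : ∀ j, 0 ≤ p j) (hps : Summable p) (ω : Ω) :
    Summable fun j => p j * missingIndicator X j ω :=
  hps.of_nonneg_of_le (fun j => mul_nonneg (hp j) (missingIndicator_mem_Icc j ω).1)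
    fun j => mul_le_of_le_one_right (hp j) (missingIndicator_mem_Icc j ω).2

lemma missingMass_mem_Icc {p : ℕ → ℝ} (hp : ∀ j, 0 ≤ p j) (hps : Summable p)
    (hsum : ∑' j, p j = 1) (ω : Ω) : missingMass p X ω ∈ Icc 0 1 := by
  refine ⟨tsum_nonneg fun j => mul_nonneg (hp j) (missingIndicator_mem_Icc j ω).1, hsum ▸ ?_⟩
  exact (summable_mul_missingIndicator p hp hps ω).tsum_le_tsum
    (fun j => mul_le_of_le_one_right (hp j) (missingIndicator_mem_Icc j ω).2) hps

lemma one_sub_mul_missingIndicator (p : ℕ → ℝ) (L : ℝ) (j : ℕ) (ω : Ω) :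
    1 - (1 - exp (-(L * p j))) * missingIndicator X j ω
      = exp (-(L * (p j * missingIndicator X j ω))) := by
  unfold missingIndicator
  split_ifs <;> simp

lemma exp_neg_mul_missingMass_le_prod {p : ℕ → ℝ} (hp : ∀ j, 0 ≤ p j) (hps : Summable p)
    {L : ℝ} (hL : 0 ≤ L) (S : Finset ℕ) (ω : Ω) :
    exp (-L * missingMass p X ω)
      ≤ ∏ j ∈ S, (1 - (1 - exp (-(L * p j))) * missingIndicator X j ω) := by
  rw [Finset.prod_congr rfl fun j _ => one_sub_mul_missingIndicator p L j ω, ← exp_sum, neg_mul,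
    Finset.sum_neg_distrib, ← Finset.mul_sum]
  gcongr
  exact (summable_mul_missingIndicator p hp hps ω).sum_le_tsum S
    fun j _ => mul_nonneg (hp j) (missingIndicator_mem_Icc j ω).1

variable [MeasurableSpace Ω]

lemma measurableSet_forall_notMem (hmeas : ∀ i, Measurable (X i)) (T : Finset ℕ) :
    MeasurableSet {ω | ∀ i, X i ω ∉ T} := by
  rw [setOf_forall_notMem_eq_iInter]
  exact MeasurableSet.iInter fun i => hmeas i T.measurableSet.compl

lemma measurable_missingIndicator (hmeas : ∀ i, Measurable (X i)) (j : ℕ) :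
    Measurable (missingIndicator X j) :=
  Measurable.ite (by simpa using measurableSet_forall_notMem hmeas {j}) measurable_const
    measurable_const

structure IsIIDSample (μ : Measure Ω) (X : ι → Ω → ℕ) (p : ℕ → ℝ) : Prop where
  measurable : ∀ i, Measurable (X i)
  iIndepFun : iIndepFun X μ
  measure_eq : ∀ i j, μ {ω | X i ω = j} = ENNReal.ofReal (p j)

variable {μ : Measure Ω} [IsProbabilityMeasure μ] {p : ℕ → ℝ}

lemma measureReal_forall_notMem (hX : IsIIDSample μ X p) (hp : ∀ j, 0 ≤ p j)
    (T : Finset ℕ) :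
    μ.real {ω | ∀ i, X i ω ∉ T} = (1 - ∑ j ∈ T, p j) ^ Fintype.card ι := by
  have hmem : ∀ i, μ.real (X i ⁻¹' T) = ∑ j ∈ T, p j := fun i => by
    rw [← sum_measureReal_preimage_singleton T fun j _ =>
      hX.measurable i (measurableSet_singleton j)]
    refine Finset.sum_congr rfl fun j _ => ?_
    rw [measureReal_def, ← ENNReal.toReal_ofReal (hp j), ← hX.measure_eq i j]
    rfl
  rw [setOf_forall_notMem_eq_iInter, measureReal_def, hX.iIndepFun.meas_iInter fun i =>
    ⟨(T : Set ℕ)ᶜ, T.measurableSet.compl, rfl⟩, ENNReal.toReal_prod]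
  simp_rw [← measureReal_def, preimage_compl,
    probReal_compl_eq_one_sub (hX.measurable _ T.measurableSet), hmem]
  simp

lemma integral_prod_missingIndicator (hX : IsIIDSample μ X p) (hp : ∀ j, 0 ≤ p j)
    (T : Finset ℕ) :
    ∫ ω, ∏ j ∈ T, missingIndicator X j ω ∂μ = (1 - ∑ j ∈ T, p j) ^ Fintype.card ι := by
  simp_rw [prod_missingIndicator]
  rw [integral_indicator_one (measurableSet_forall_notMem hX.measurable T),
    measureReal_forall_notMem hX hp]

lemma integral_prod_one_sub_mul_missingIndicator (hX : IsIIDSample μ X p)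
    (hp : ∀ j, 0 ≤ p j) (a : ℕ → ℝ) (S : Finset ℕ) :
    ∫ ω, ∏ j ∈ S, (1 - a j * missingIndicator X j ω) ∂μ
      = emptyProductMean p a (Fintype.card ι) S := by
  have hexpand : ∀ ω, ∏ j ∈ S, (1 - a j * missingIndicator X j ω)
      = ∑ T ∈ S.powerset, (∏ j ∈ T, -a j) * ∏ j ∈ T, missingIndicator X j ω := fun ω => by
    rw [Finset.prod_congr rfl fun j _ =>
      (by ring : 1 - a j * missingIndicator X j ω = -a j * missingIndicator X j ω + 1),
      Finset.prod_add]
    simp_rw [Finset.prod_const_one, mul_one, Finset.prod_mul_distrib]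
  simp_rw [hexpand]
  rw [integral_finsetSum]
  · simp_rw [integral_const_mul, integral_prod_missingIndicator hX hp]
    rfl
  · intro T _
    refine Integrable.const_mul ?_ _
    simp_rw [prod_missingIndicator]
    exact (integrable_const 1).indicator (measurableSet_forall_notMem hX.measurable T)

lemma measurable_missingMass (hmeas : ∀ i, Measurable (X i)) (hp : ∀ j, 0 ≤ p j)
    (hps : Summable p) : Measurable (missingMass p X) := by
  refine measurable_of_tendsto_metrizable
    (f := fun N ω => ∑ j ∈ Finset.range N, p j * missingIndicator X j ω)
    (fun N => Finset.measurable_sum _ fun j _ =>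
      (measurable_missingIndicator hmeas j).const_mul _) ?_
  exact tendsto_pi_nhds.2 fun ω => (summable_mul_missingIndicator p hp hps ω).hasSum.tendsto_sum_nat

lemma integral_missingMass (hX : IsIIDSample μ X p) (hp : ∀ j, 0 ≤ p j)
    (hps : Summable p) :
    ∫ ω, missingMass p X ω ∂μ = ∑' j, p j * (1 - p j) ^ Fintype.card ι := by
  have hmean : ∀ j, ∫ ω, p j * missingIndicator X j ω ∂μ = p j * (1 - p j) ^ Fintype.card ι :=
    fun j => by
      simpa [integral_const_mul] using
        congrArg (p j * ·) (integral_prod_missingIndicator hX hp {j})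
  have hint : ∀ j, Integrable (fun ω => p j * missingIndicator X j ω) μ := fun j =>
    ((integrable_const 1).mono' (measurable_missingIndicator hX.measurable j).aestronglyMeasurable
      (ae_of_all _ (norm_missingIndicator_le_one j))).const_mul _
  unfold missingMass
  rw [← integral_tsum_of_summable_integral_norm hint]
  · exact tsum_congr hmean
  refine hps.of_nonneg_of_le (fun j => integral_nonneg fun _ => norm_nonneg _) fun j => ?_
  calc ∫ ω, ‖p j * missingIndicator X j ω‖ ∂μ ≤ ∫ _, p j ∂μ :=
        integral_mono (hint j).norm (integrable_const _) fun ω => by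
          rw [norm_mul, Real.norm_of_nonneg (hp j)]
          exact mul_le_of_le_one_right (hp j) (norm_missingIndicator_le_one j ω)
    _ = p j := by simp

lemma integrable_exp_mul_missingMass (hp : ∀ j, 0 ≤ p j) (hps : Summable p)
    (hsum : ∑' j, p j = 1) (hmeas : ∀ i, Measurable (X i)) (t : ℝ) :
    Integrable (fun ω => exp (t * missingMass p X ω)) μ := by
  have hmeas' : Measurable fun ω => exp (t * missingMass p X ω) :=
    ((measurable_missingMass hmeas hp hps).const_mul t).exp
  refine Integrable.of_bound hmeas'.aestronglyMeasurable (exp |t|) (ae_of_all _ fun ω => ?_)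
  obtain ⟨hU0, hU1⟩ := missingMass_mem_Icc (X := X) hp hps hsum ω
  rw [Real.norm_of_nonneg (exp_nonneg _), exp_le_exp]
  nlinarith [le_abs_self t, abs_nonneg t]

lemma integrable_prod_one_sub_mul_missingIndicator (hmeas : ∀ i, Measurable (X i))
    {a : ℕ → ℝ} (ha : ∀ j, a j ∈ Icc 0 1) (S : Finset ℕ) :
    Integrable (fun ω => ∏ j ∈ S, (1 - a j * missingIndicator X j ω)) μ := by
  have hfactor : ∀ j ω, 1 - a j * missingIndicator X j ω ∈ Icc 0 1 := fun j ω => by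
    obtain ⟨ha0, ha1⟩ := ha j
    obtain ⟨hZ0, hZ1⟩ := missingIndicator_mem_Icc (X := X) j ω
    constructor <;> nlinarith
  refine Integrable.of_bound (Finset.measurable_prod _ fun j _ => measurable_const.sub
    ((measurable_missingIndicator hmeas j).const_mul _)).aestronglyMeasurable 1
    (ae_of_all _ fun ω => ?_)
  rw [Real.norm_of_nonneg (Finset.prod_nonneg fun j _ => (hfactor j ω).1)]
  exact Finset.prod_le_one (fun j _ => (hfactor j ω).1) fun j _ => (hfactor j ω).2

lemma mgf_missingMass_neg_le_of_finset (hX : IsIIDSample μ X p)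
    (hp : ∀ j, 0 ≤ p j) (hps : Summable p) (hsum : ∑' j, p j = 1) {C L : ℝ} (hC : 0 < C)
    (hι : 0 < Fintype.card ι)
    (hCy : ∀ y ∈ Ioo (0 : ℝ) (1 / 2), C * (y * (1 - y) * log (1 / y)) ≤ 2) (hL : 0 ≤ L)
    (S : Finset ℕ) :
    mgf (missingMass p X) μ (-L)
      ≤ exp (-(L * ∑ j ∈ S, p j * (1 - p j) ^ Fintype.card ι)
          + L ^ 2 / (C * Fintype.card ι)) := by
  set n := Fintype.card ι
  set a : ℕ → ℝ := fun j => 1 - exp (-(L * p j))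
  have hS : ∑ j ∈ S, p j ≤ 1 := hsum ▸ hps.sum_le_tsum S fun j _ => hp j
  have hp1 : ∀ j, p j ≤ 1 := fun j => hsum ▸ hps.le_tsum j fun k _ => hp k
  have ha : ∀ j, a j ∈ Icc 0 1 := fun j =>
    ⟨sub_nonneg.2 (exp_le_one_iff.2 (by nlinarith [hp j])), by linarith [exp_pos (-(L * p j))]⟩
  calc mgf (missingMass p X) μ (-L)
      ≤ ∫ ω, ∏ j ∈ S, (1 - a j * missingIndicator X j ω) ∂μ :=
        integral_mono (integrable_exp_mul_missingMass hp hps hsum hX.measurable _)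
          (integrable_prod_one_sub_mul_missingIndicator hX.measurable ha S)
          (exp_neg_mul_missingMass_le_prod hp hps hL S)
    _ = emptyProductMean p a n S := integral_prod_one_sub_mul_missingIndicator hX hp a S
    _ ≤ ∏ j ∈ S, (1 - a j * (1 - p j) ^ n) :=
        emptyProductMean_le_prod n (fun j _ => hp j) hS (fun j _ => (ha j).1) fun j _ => (ha j).2
    _ ≤ ∏ j ∈ S, exp (-(L * (p j * (1 - p j) ^ n)) + L ^ 2 * p j / (C * n)) :=
        Finset.prod_le_prod (fun j _ => by
          have := pow_le_one₀ (sub_nonneg.2 (hp1 j)) (by linarith [hp j]) (n := n)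
          nlinarith [(ha j).1, (ha j).2, pow_nonneg (sub_nonneg.2 (hp1 j)) n]) fun j _ =>
          one_sub_mul_pow_le_exp hC hι hCy (hp j) (hp1 j) hL
    _ = exp (-(L * ∑ j ∈ S, p j * (1 - p j) ^ n) + L ^ 2 / (C * n) * ∑ j ∈ S, p j) := by
        rw [← exp_sum, Finset.sum_add_distrib, Finset.sum_neg_distrib, Finset.mul_sum,
          Finset.mul_sum]
        congr 2
        exact Finset.sum_congr rfl fun j _ => by ring
    _ ≤ _ := by
        gcongr
        exact mul_le_of_le_one_right (by positivity) hS

lemma mgf_missingMass_neg_le (hX : IsIIDSample μ X p)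
    (hp : ∀ j, 0 ≤ p j) (hps : Summable p) (hsum : ∑' j, p j = 1) {C L : ℝ} (hC : 0 < C)
    (hι : 0 < Fintype.card ι)
    (hCy : ∀ y ∈ Ioo (0 : ℝ) (1 / 2), C * (y * (1 - y) * log (1 / y)) ≤ 2) (hL : 0 ≤ L) :
    mgf (missingMass p X) μ (-L)
      ≤ exp (-(L * ∑' j, p j * (1 - p j) ^ Fintype.card ι)
          + L ^ 2 / (C * Fintype.card ι)) := by
  have hp1 : ∀ j, p j ≤ 1 := fun j => hsum ▸ hps.le_tsum j fun k _ => hp k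
  have hmean : Summable fun j => p j * (1 - p j) ^ Fintype.card ι :=
    hps.of_nonneg_of_le (fun j => mul_nonneg (hp j) (pow_nonneg (sub_nonneg.2 (hp1 j)) _))
      fun j => mul_le_of_le_one_right (hp j)
        (pow_le_one₀ (sub_nonneg.2 (hp1 j)) (by linarith [hp j]))
  have hlim := (continuous_exp.tendsto _).comp
    ((hmean.hasSum.tendsto_sum_nat.const_mul L).neg.add_const (L ^ 2 / (C * Fintype.card ι)))
  exact ge_of_tendsto' hlim fun N =>
    mgf_missingMass_neg_le_of_finset hX hp hps hsum hC hι hCy hL (Finset.range N)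

lemma measureReal_missingMass_le_integral_sub_le (hX : IsIIDSample μ X p)
    (hp : ∀ j, 0 ≤ p j) (hps : Summable p) (hsum : ∑' j, p j = 1) {C ε : ℝ} (hC : 0 < C)
    (hι : 0 < Fintype.card ι)
    (hCy : ∀ y ∈ Ioo (0 : ℝ) (1 / 2), C * (y * (1 - y) * log (1 / y)) ≤ 2) (hε : 0 ≤ ε) :
    μ.real {ω | missingMass p X ω ≤ ∫ ω, missingMass p X ω ∂μ - ε}
      ≤ exp (-C * Fintype.card ι * ε ^ 2 / 4) := by
  set n := Fintype.card ι
  set L := C * n * ε / 2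
  have hL : 0 ≤ L := by positivity
  have hn : (0 : ℝ) < n := by exact_mod_cast hι
  rw [integral_missingMass hX hp hps]
  calc _ ≤ exp (-(-L) * (∑' j, p j * (1 - p j) ^ n - ε)) * mgf (missingMass p X) μ (-L) :=
        measure_le_le_exp_mul_mgf _ (by linarith)
          (integrable_exp_mul_missingMass hp hps hsum hX.measurable _)
    _ ≤ exp (L * (∑' j, p j * (1 - p j) ^ n - ε))
          * exp (-(L * ∑' j, p j * (1 - p j) ^ n) + L ^ 2 / (C * n)) := by
        rw [neg_neg]
        gcongr
        exact mgf_missingMass_neg_le hX hp hps hsum hC hι hCy hL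
    _ = exp (-C * n * ε ^ 2 / 4) := by
        rw [← exp_add]
        congr 1
        field_simp
        ring

end MissingMass

/-- Missing mass, lower tail: if `X₁,…,Xₙ` are i.i.d. with `P(Xᵢ = j) = p_j`,
`U_n = ∑_j p_j · 1{j ∉ {X₁,…,Xₙ}}`, and `C₀ = inf_{0<x<1/2} 2/(x(1-x) log(1/x))`,
then `P(U_n < E U_n − ε) ≤ exp(-C₀ n ε²/4)`. -/
theorem missing_mass_lower_tail
    {Ω : Type*} [MeasurableSpace Ω] (μ : Measure Ω) [IsProbabilityMeasure μ]
    (p : ℕ → ℝ) (hp : ∀ j, 0 ≤ p j) (hsum : ∑' j, p j = 1)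
    (n : ℕ) (hn : 1 ≤ n)
    (X : Fin n → Ω → ℕ) (hmeas : ∀ i, Measurable (X i))
    (hindep : iIndepFun X μ)
    (hdist : ∀ i j, μ {ω | X i ω = j} = ENNReal.ofReal (p j))
    (C₀ : ℝ)
    (hC₀ : C₀ = sInf ((fun x : ℝ => 2 / (x * (1 - x) * Real.log (1/x))) ''
      Set.Ioo (0:ℝ) (1/2)))
    (ε : ℝ) (hε : 0 < ε) :
    μ {ω | (∑' j, p j * (if ∀ i, X i ω ≠ j then (1:ℝ) else 0))
        < (∫ ω, (∑' j, p j * (if ∀ i, X i ω ≠ j then (1:ℝ) else 0)) ∂μ) - ε}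
      ≤ ENNReal.ofReal (Real.exp (-C₀ * n * ε^2 / 4)) := by
  have hps : Summable p := by
    by_contra h
    simp [tsum_eq_zero_of_not_summable h] at hsum
  have hU : ∀ ω, ∑' j, p j * (if ∀ i, X i ω ≠ j then (1:ℝ) else 0) = missingMass p X ω :=
    fun ω => by
      unfold missingMass missingIndicator
      congr!
  have hC : 0 < C₀ := hC₀ ▸ two_pos.trans_le two_le_sInf_image
  have hbound := measureReal_missingMass_le_integral_sub_le ⟨hmeas, hindep, hdist⟩ hp hps hsum hC
    (by rw [Fintype.card_fin]; exact hn) (fun y hy => hC₀ ▸ sInf_image_mul_le_two hy) hε.le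
  simp only [hU, Fintype.card_fin] at hbound ⊢
  calc μ {ω | missingMass p X ω < ∫ ω, missingMass p X ω ∂μ - ε}
      ≤ μ {ω | missingMass p X ω ≤ ∫ ω, missingMass p X ω ∂μ - ε} :=
        measure_mono fun ω (h : missingMass p X ω < _) => h.le
    _ = ENNReal.ofReal (μ.real {ω | missingMass p X ω ≤ ∫ ω, missingMass p X ω ∂μ - ε}) :=
        (ofReal_measureReal (measure_ne_top μ _)).symm
    _ ≤ _ := ENNReal.ofReal_le_ofReal hbound
end
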